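/- arXiv:2011.07295 — 9 statements merged into one kernel-verified Lean document; each statement's English description precedes it below -/
import Mathlib

section
/- Let G be a finite simple graph that admits a Grundy coloring using t colors. Then there exists k ≤ t such that G admits a proper coloring using k colors that is simultaneously a Grundy coloring and a color-dominating coloring. -/
/-- A proper vertex coloring of `G` using exactly the colors `{1, …, k}`:
every vertex gets a color in `{1, …, k}`, adjacent vertices get different
colors, and every color in `{1, …, k}` is used. -/
def IsProperColoring {V : Type*} (G : SimpleGraph V) (k : ℕ) (c : V → ℕ) : Prop :=
  (∀ v, c v ∈ Finset.Icc 1 k) ∧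
  (∀ u v, G.Adj u v → c u ≠ c v) ∧
  (∀ i ∈ Finset.Icc 1 k, ∃ v, c v = i)

/-- A Grundy coloring of `G` using `k` colors: a proper coloring using `k` colors
such that every vertex of color `j` has, for each color `i < j`, a neighbor of color `i`. -/
def IsGrundyColoring {V : Type*} (G : SimpleGraph V) (k : ℕ) (c : V → ℕ) : Prop :=
  IsProperColoring G k c ∧
  ∀ v, ∀ i ∈ Finset.Icc 1 k, i < c v → ∃ w, G.Adj v w ∧ c w = i

/-- In a coloring `c` of `G` with colors `{1, …, k}`, a vertex `v` is color-dominating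
if for every color `j ∈ {1, …, k}` different from the color of `v`, the vertex `v`
has a neighbor of color `j`. -/
def IsCDVertex {V : Type*} (G : SimpleGraph V) (k : ℕ) (c : V → ℕ) (v : V) : Prop :=
  ∀ j ∈ Finset.Icc 1 k, j ≠ c v → ∃ w, G.Adj v w ∧ c w = j

/-- A color-dominating coloring (b-coloring) of `G` using `k` colors: a proper coloring
using `k` colors in which every color class contains a color-dominating vertex. -/
def IsBColoring {V : Type*} (G : SimpleGraph V) (k : ℕ) (c : V → ℕ) : Prop :=
  IsProperColoring G k c ∧
  ∀ i ∈ Finset.Icc 1 k, ∃ v, c v = i ∧ IsCDVertex G k c v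

/-- A z-coloring of `G` using `k` colors: a proper coloring which is simultaneously
a Grundy coloring and a color-dominating coloring, and which admits color-dominating
vertices `u 1, …, u k` with `c (u j) = j` such that `u k` is adjacent to each `u j`, `j ≠ k`. -/
def IsZColoring {V : Type*} (G : SimpleGraph V) (k : ℕ) (c : V → ℕ) : Prop :=
  IsGrundyColoring G k c ∧ IsBColoring G k c ∧
  ∃ u : ℕ → V,
    (∀ j ∈ Finset.Icc 1 k, c (u j) = j ∧ IsCDVertex G k c (u j)) ∧
    (∀ j ∈ Finset.Icc 1 k, j ≠ k → G.Adj (u k) (u j))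

/-- The Grundy number of `G`: the maximum `k` such that `G` admits a Grundy coloring
using `k` colors. -/
noncomputable def grundyNumber {V : Type*} (G : SimpleGraph V) : ℕ :=
  sSup {k | ∃ c : V → ℕ, IsGrundyColoring G k c}

/-- The b-chromatic number of `G`: the maximum `k` such that `G` admits a b-coloring
using `k` colors. -/
noncomputable def bNumber {V : Type*} (G : SimpleGraph V) : ℕ :=
  sSup {k | ∃ c : V → ℕ, IsBColoring G k c}

/-- The z-chromatic number of `G`: the maximum `k` such that `G` admits a z-coloring
using `k` colors. -/
noncomputable def zNumber {V : Type*} (G : SimpleGraph V) : ℕ :=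
  sSup {k | ∃ c : V → ℕ, IsZColoring G k c}

open Finset in
open scoped Classical in
/-- Key step: if a Grundy coloring with `t` colors has a color class `i` with no
color-dominating vertex, we can recolor to get a Grundy coloring with `t - 1` colors. -/
lemma key_step {V : Type*} (G : SimpleGraph V) (t i : ℕ) (hi1 : 1 ≤ i) (hit : i ≤ t)
    (c : V → ℕ) (hc : IsGrundyColoring G t c)
    (h : ∀ v, c v = i → ∃ j, j ∈ Finset.Icc 1 t ∧ j ≠ i ∧ ∀ w, G.Adj v w → c w ≠ j) :
    ∃ c' : V → ℕ, IsGrundyColoring G (t - 1) c' := by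
  obtain ⟨⟨hrange, hproper, hsurj⟩, hgrundy⟩ := hc
  -- recolor each vertex of color `i` to the least missing color (which is `> i`)
  set d : V → ℕ := fun v => if hv : c v = i then Nat.find (h v hv) else c v with hd
  have hd_pos : ∀ v (hv : c v = i), d v = Nat.find (h v hv) := by
    intro v hv; simp only [hd, dif_pos hv]
  have hd_neg : ∀ v, c v ≠ i → d v = c v := by
    intro v hv; simp only [hd, dif_neg hv]
  have hd_range : ∀ v, 1 ≤ d v ∧ d v ≤ t ∧ d v ≠ i := by
    intro v
    by_cases hv : c v = i
    · rw [hd_pos v hv]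
      have hs := Nat.find_spec (h v hv)
      have := Finset.mem_Icc.mp hs.1
      exact ⟨this.1, this.2, hs.2.1⟩
    · rw [hd_neg v hv]
      have := Finset.mem_Icc.mp (hrange v)
      exact ⟨this.1, this.2, hv⟩
  -- the new color of a recolored vertex exceeds `i`
  have hd_gt : ∀ v, c v = i → i < d v := by
    intro v hv
    rcases lt_trichotomy (d v) i with hlt | heq | hgt
    · exfalso
      have hs := Nat.find_spec (h v hv)
      rw [← hd_pos v hv] at hs
      have h1 := (hd_range v).1
      obtain ⟨w, hw1, hw2⟩ := hgrundy v (d v) (Finset.mem_Icc.mpr ⟨h1, le_trans (le_of_lt hlt) hit⟩)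
        (by rw [hv]; exact hlt)
      exact hs.2.2 w hw1 hw2
    · exact absurd heq (hd_range v).2.2
    · exact hgt
  -- Grundy property for `d` (with respect to colors `≠ i`)
  have hd_grundy : ∀ v j, 1 ≤ j → j ≤ t → j ≠ i → j < d v → ∃ w, G.Adj v w ∧ d w = j := by
    intro v j h1 h2 hji hj
    suffices hw : ∃ w, G.Adj v w ∧ c w = j by
      obtain ⟨w, hw1, hw2⟩ := hw
      exact ⟨w, hw1, by rw [hd_neg w (by rw [hw2]; exact hji)]; exact hw2⟩
    by_cases hv : c v = i
    · rw [hd_pos v hv] at hj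
      have := Nat.find_min (h v hv) hj
      push_neg at this
      exact this (Finset.mem_Icc.mpr ⟨h1, h2⟩) hji
    · rw [hd_neg v hv] at hj
      exact hgrundy v j (Finset.mem_Icc.mpr ⟨h1, h2⟩) hj
  -- properness of `d`
  have hd_proper : ∀ u v, G.Adj u v → d u ≠ d v := by
    intro u v huv
    by_cases hu : c u = i <;> by_cases hv : c v = i
    · exact absurd (hu.trans hv.symm) (hproper u v huv)
    · rw [hd_pos u hu, hd_neg v hv]
      exact fun heq => (Nat.find_spec (h u hu)).2.2 v huv heq.symm
    · rw [hd_neg u hu, hd_pos v hv]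
      exact fun heq => (Nat.find_spec (h v hv)).2.2 u huv.symm heq
    · rw [hd_neg u hu, hd_neg v hv]; exact hproper u v huv
  -- surjectivity of `d` onto colors `≠ i`
  have hd_surj : ∀ j, 1 ≤ j → j ≤ t → j ≠ i → ∃ v, d v = j := by
    intro j h1 h2 hji
    obtain ⟨v, hv⟩ := hsurj j (Finset.mem_Icc.mpr ⟨h1, h2⟩)
    exact ⟨v, by rw [hd_neg v (by rw [hv]; exact hji)]; exact hv⟩
  -- now shift colors above `i` down by one
  refine ⟨fun v => if i < d v then d v - 1 else d v, ⟨?_, ?_, ?_⟩, ?_⟩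
  · intro v
    obtain ⟨h1, h2, h3⟩ := hd_range v
    rw [Finset.mem_Icc]
    beta_reduce
    split_ifs <;> omega
  · intro u v huv
    have hne := hd_proper u v huv
    have h3 := (hd_range u).2.2
    have h4 := (hd_range v).2.2
    beta_reduce
    split_ifs <;> omega
  · intro j' hj'
    obtain ⟨h1', h2'⟩ := Finset.mem_Icc.mp hj'
    obtain ⟨v, hv⟩ := hd_surj (if i ≤ j' then j' + 1 else j')
      (by split_ifs <;> omega) (by split_ifs <;> omega) (by split_ifs <;> omega)
    refine ⟨v, ?_⟩
    beta_reduce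
    rw [hv]
    split_ifs <;> omega
  · intro v j' hj' hlt
    obtain ⟨h1', h2'⟩ := Finset.mem_Icc.mp hj'
    obtain ⟨h1, h2, h3⟩ := hd_range v
    obtain ⟨w, hw1, hw2⟩ := hd_grundy v (if i ≤ j' then j' + 1 else j')
      (by split_ifs <;> omega) (by split_ifs <;> omega) (by split_ifs <;> omega)
      (by beta_reduce at hlt; split_ifs at hlt ⊢ <;> omega)
    refine ⟨w, hw1, ?_⟩
    beta_reduce
    rw [hw2]
    split_ifs <;> omega

/-- If a finite simple graph admits a Grundy coloring using `t` colors,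
then there exists `k ≤ t` such that it admits a proper coloring using `k` colors that is
simultaneously a Grundy coloring and a color-dominating coloring. -/
theorem statement_1 {V : Type*} [Fintype V] (G : SimpleGraph V) (t : ℕ) (c : V → ℕ)
    (hc : IsGrundyColoring G t c) :
    ∃ k ≤ t, ∃ c' : V → ℕ, IsGrundyColoring G k c' ∧ IsBColoring G k c' := by
  induction t using Nat.strong_induction_on generalizing c with
  | _ t ih =>
    by_cases hb : ∀ i ∈ Finset.Icc 1 t, ∃ v, c v = i ∧ IsCDVertex G t c v
    · exact ⟨t, le_refl t, c, hc, hc.1, hb⟩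
    · push_neg at hb
      obtain ⟨i, hi, hnoc⟩ := hb
      obtain ⟨hi1, hi2⟩ := Finset.mem_Icc.mp hi
      have h : ∀ v, c v = i → ∃ j, j ∈ Finset.Icc 1 t ∧ j ≠ i ∧
          ∀ w, G.Adj v w → c w ≠ j := by
        intro v hv
        have hcd := hnoc v hv
        unfold IsCDVertex at hcd
        push_neg at hcd
        obtain ⟨j, hj, hji, hw⟩ := hcd
        rw [hv] at hji
        exact ⟨j, hj, hji, hw⟩
      obtain ⟨c', hc'⟩ := key_step G t i hi1 hi2 c hc h
      obtain ⟨k, hk, c'', h1, h2⟩ := ih (t - 1) (by omega) c' hc'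
      exact ⟨k, by omega, c'', h1, h2⟩
end

section
/- For every positive integer n there exists a finite simple graph G such that Γ(G) ≥ n, b(G) ≥ n, and z(G) ≤ 3. -/
/-!
Take the disjoint union of the crown graph `K_{n+1,n+1}` minus a perfect matching, with one
matching edge `(none, false) - (none, true)` put back, and of `n + 2` disjoint stars
`K_{1,n+1}`. Coloring the crown by matching index, with the top two colors on the restored
edge, is a Grundy coloring with `n + 2` colors. Coloring the two crown sides `1` and `2` and
each star with all `n + 2` colors is a b-coloring, the star centers being color-dominating.

In a z-coloring with `k ≥ 3` colors, the color-dominating vertices `u 1` and `u 2` have the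
common neighbor `u k`, so between them they have neighbors of every color. But in both
components the neighbors of two vertices with a common neighbor are all adjacent to a single
vertex (`(none, _)` in the crown, a leaf in a star), and that vertex then has no color left.
Hence `z ≤ 2`.
-/

open Finset SimpleGraph

lemma exists_fin_val_add_one_eq {m i : ℕ} (hi : i ∈ Icc 1 m) : ∃ a : Fin m, (a : ℕ) + 1 = i :=
  ⟨⟨i - 1, by grind⟩, by grind⟩

section Colorings

variable {V W : Type*} {G : SimpleGraph V} {H : SimpleGraph W} {k l : ℕ} {c : V → ℕ} {d : W → ℕ}

lemma IsProperColoring.le_card [Fintype V] (hc : IsProperColoring G k c) :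
    k ≤ Fintype.card V := by
  classical
  calc k = #(Icc 1 k) := by simp
    _ ≤ #(univ.image c) := card_le_card fun i hi ↦ by simpa using hc.2.2 i hi
    _ ≤ Fintype.card V := card_image_le

lemma le_grundyNumber [Fintype V] (hc : IsGrundyColoring G k c) : k ≤ grundyNumber G :=
  le_csSup ⟨Fintype.card V, fun _ ⟨_, h⟩ ↦ h.1.le_card⟩ ⟨c, hc⟩

lemma le_bNumber [Fintype V] (hc : IsBColoring G k c) : k ≤ bNumber G :=
  le_csSup ⟨Fintype.card V, fun _ ⟨_, h⟩ ↦ h.1.le_card⟩ ⟨c, hc⟩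

lemma zNumber_le {a : ℕ} (h : ∀ k c, IsZColoring G k c → k ≤ a) : zNumber G ≤ a :=
  csSup_le' fun _ ⟨c, hc⟩ ↦ h _ c hc

lemma IsProperColoring.sum (hc : IsProperColoring G k c) (hd : IsProperColoring H l d) :
    IsProperColoring (G ⊕g H) (max k l) (Sum.elim c d) := by
  refine ⟨?_, ?_, fun i hi ↦ ?_⟩
  · rintro (v | w)
    · exact Icc_subset_Icc_right (le_max_left k l) (hc.1 v)
    · exact Icc_subset_Icc_right (le_max_right k l) (hd.1 w)
  · rintro (u | u) (v | v) huv <;> simp only [sum_adj] at huv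
    · exact hc.2.1 u v huv
    · exact hd.2.1 u v huv
  · rw [mem_Icc, le_max_iff] at hi
    rcases hi with ⟨hi1, hik | hil⟩
    · obtain ⟨v, hv⟩ := hc.2.2 i (mem_Icc.2 ⟨hi1, hik⟩)
      exact ⟨.inl v, hv⟩
    · obtain ⟨w, hw⟩ := hd.2.2 i (mem_Icc.2 ⟨hi1, hil⟩)
      exact ⟨.inr w, hw⟩

lemma IsGrundyColoring.sum (hc : IsGrundyColoring G k c) (hd : IsGrundyColoring H l d) :
    IsGrundyColoring (G ⊕g H) (max k l) (Sum.elim c d) := by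
  refine ⟨hc.1.sum hd.1, ?_⟩
  rintro (v | w) i hi hlt
  · have hik : i ∈ Icc 1 k := by grind [hc.1.1 v]
    obtain ⟨u, hvu, hu⟩ := hc.2 v i hik hlt
    exact ⟨.inl u, sum_adj_inl.2 hvu, hu⟩
  · have hil : i ∈ Icc 1 l := by grind [hd.1.1 w]
    obtain ⟨u, hwu, hu⟩ := hd.2 w i hil hlt
    exact ⟨.inr u, sum_adj_inr.2 hwu, hu⟩

lemma IsProperColoring.sum_isBColoring (hc : IsProperColoring G k c) (hd : IsBColoring H l d)
    (hkl : k ≤ l) : IsBColoring (G ⊕g H) l (Sum.elim c d) := by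
  refine ⟨max_eq_right hkl ▸ hc.sum hd.1, fun i hi ↦ ?_⟩
  obtain ⟨w, hw, hdom⟩ := hd.2 i hi
  refine ⟨.inr w, hw, fun j hj hji ↦ ?_⟩
  obtain ⟨u, hwu, hu⟩ := hdom j hj hji
  exact ⟨.inr u, sum_adj_inr.2 hwu, hu⟩

lemma IsProperColoring.exists_color_not_mem (hc : IsProperColoring G k c) {S : Set V} {z : V}
    (hz : ∀ v ∈ S, G.Adj z v) : ∃ j ∈ Icc 1 k, ∀ v ∈ S, c v ≠ j :=
  ⟨c z, hc.1 z, fun v hv ↦ (hc.2.1 z v (hz v hv)).symm⟩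

lemma exists_adj_color_of_isCDVertex {u₁ u₂ : V} (h₁ : IsCDVertex G k c u₁)
    (h₂ : IsCDVertex G k c u₂) (hne : c u₁ ≠ c u₂) :
    ∀ j ∈ Icc 1 k, ∃ v, (G.Adj u₁ v ∨ G.Adj u₂ v) ∧ c v = j := by
  intro j hj
  by_cases hj₁ : j = c u₁
  · obtain ⟨v, hv, hcv⟩ := h₂ j hj (hj₁ ▸ hne)
    exact ⟨v, .inr hv, hcv⟩
  · obtain ⟨v, hv, hcv⟩ := h₁ j hj hj₁
    exact ⟨v, .inl hv, hcv⟩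

end Colorings

namespace SimpleGraph

section CherryDominated

variable {V W : Type*}

/-- A cherry is a path `x - w - y`. -/
def CherryDominated (G : SimpleGraph V) : Prop :=
  ∀ ⦃w x y⦄, G.Adj w x → G.Adj w y → x ≠ y → ∃ z, ∀ v, G.Adj x v ∨ G.Adj y v → G.Adj z v

lemma CherryDominated.sum {G : SimpleGraph V} {H : SimpleGraph W} (hG : G.CherryDominated)
    (hH : H.CherryDominated) : (G ⊕g H).CherryDominated := by
  rintro (w | w) (x | x) (y | y) hx hy hxy <;> simp only [sum_adj] at hx hy
  · obtain ⟨z, hz⟩ := hG hx hy (Sum.inl_injective.ne_iff.1 hxy)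
    refine ⟨.inl z, ?_⟩
    rintro (v | v) hv <;> simp only [sum_adj, or_self] at hv ⊢
    exact hz v hv
  · obtain ⟨z, hz⟩ := hH hx hy (Sum.inr_injective.ne_iff.1 hxy)
    refine ⟨.inr z, ?_⟩
    rintro (v | v) hv <;> simp only [sum_adj, or_self] at hv ⊢
    exact hz v hv

lemma CherryDominated.le_two_of_isZColoring {G : SimpleGraph V} (hG : G.CherryDominated)
    {k : ℕ} {c : V → ℕ} (hc : IsZColoring G k c) : k ≤ 2 := by
  by_contra! hk
  obtain ⟨hgrundy, -, u, hu, hstar⟩ := hc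
  obtain ⟨hc₁, hdom₁⟩ := hu 1 (mem_Icc.2 ⟨le_rfl, by omega⟩)
  obtain ⟨hc₂, hdom₂⟩ := hu 2 (mem_Icc.2 ⟨by omega, by omega⟩)
  have hne : c (u 1) ≠ c (u 2) := by omega
  obtain ⟨z, hz⟩ := hG (hstar 1 (mem_Icc.2 ⟨le_rfl, by omega⟩) (by omega))
    (hstar 2 (mem_Icc.2 ⟨by omega, by omega⟩) (by omega)) fun h ↦ hne (congrArg c h)
  obtain ⟨j, hj, hmiss⟩ :=
    hgrundy.1.exists_color_not_mem (S := {v | G.Adj (u 1) v ∨ G.Adj (u 2) v}) hz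
  obtain ⟨v, hv, hcv⟩ := exists_adj_color_of_isCDVertex hdom₁ hdom₂ hne j hj
  exact hmiss v hv hcv

end CherryDominated

/-- `K_{k+1,k+1}` minus a perfect matching, with the matching edge at `none` put back. -/
def crownGraph (k : ℕ) : SimpleGraph (Option (Fin k) × Bool) where
  Adj x y := x.2 ≠ y.2 ∧ (x.1 = y.1 → x.1 = none)
  symm := ⟨fun _ _ h ↦ ⟨h.1.symm, fun e ↦ e.trans (h.2 e.symm)⟩⟩
  loopless := ⟨fun _ h ↦ h.1 rfl⟩

/-- `m` disjoint stars `K_{1,m-1}`: star `a` has center `(a, a)` and leaves `(a, b)`. -/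
def starForest (m : ℕ) : SimpleGraph (Fin m × Fin m) where
  Adj x y := x.1 = y.1 ∧ (starGraph x.1).Adj x.2 y.2
  symm := ⟨fun _ _ h ↦ ⟨h.1.symm, h.1 ▸ h.2.symm⟩⟩
  loopless := ⟨fun _ h ↦ h.2.ne rfl⟩

def crownGrundyColoring (k : ℕ) : Option (Fin k) × Bool → ℕ
  | (some a, _) => a + 1
  | (none, s) => k + 1 + s.toNat

def starGrundyColoring (m : ℕ) (x : Fin m × Fin m) : ℕ := if x.2 = x.1 then 1 else 2

variable {k m : ℕ}

lemma crownGraph_adj {x y : Option (Fin k) × Bool} :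
    (crownGraph k).Adj x y ↔ x.2 ≠ y.2 ∧ (x.1 = y.1 → x.1 = none) := Iff.rfl

lemma starForest_adj {x y : Fin m × Fin m} :
    (starForest m).Adj x y ↔ x.1 = y.1 ∧ x.2 ≠ y.2 ∧ (x.2 = x.1 ∨ y.2 = x.1) := by
  simp [starForest]

lemma crownGraph_cherryDominated : (crownGraph k).CherryDominated := by
  rintro ⟨p, s⟩ ⟨q, t⟩ ⟨r, t'⟩ hx hy -
  obtain rfl : t = t' := by
    rw [crownGraph_adj] at hx hy
    cases s <;> cases t <;> cases t' <;> simp_all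
  refine ⟨(none, t), fun v hv ↦ ⟨?_, fun _ ↦ rfl⟩⟩
  rcases hv with hv | hv <;> exact hv.1

lemma starForest_cherryDominated : (starForest m).CherryDominated := by
  rintro ⟨a, b⟩ ⟨a₁, b₁⟩ ⟨a₂, b₂⟩ hx hy hxy
  rw [starForest_adj] at hx hy
  refine ⟨(a₁, b₁), fun v hv ↦ ?_⟩
  rcases hv with hv | hv
  · exact hv
  · rw [starForest_adj] at hv ⊢
    grind

lemma isGrundyColoring_crownGraph :
    IsGrundyColoring (crownGraph k) (k + 2) (crownGrundyColoring k) := by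
  refine ⟨⟨?_, ?_, fun i hi ↦ ?_⟩, ?_⟩
  · rintro ⟨_ | a, s⟩ <;> simp only [crownGrundyColoring, mem_Icc]
    · have := s.toNat_le
      omega
    · omega
  · rintro ⟨_ | a, s⟩ ⟨_ | b, t⟩ ⟨hst, hab⟩ <;> simp only [crownGrundyColoring]
    · cases s <;> cases t <;> simp_all
    · omega
    · omega
    · have : a ≠ b := fun h ↦ by simp [h] at hab
      exact (Nat.succ_injective.ne (Fin.val_injective.ne this))
  · by_cases hik : i ≤ k
    · obtain ⟨a, rfl⟩ := exists_fin_val_add_one_eq (mem_Icc.2 ⟨(mem_Icc.1 hi).1, hik⟩)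
      exact ⟨(some a, false), rfl⟩
    · obtain rfl | rfl : i = k + 1 ∨ i = k + 2 := by grind
      exacts [⟨(none, false), rfl⟩, ⟨(none, true), rfl⟩]
  · rintro ⟨p, s⟩ i hi hlt
    by_cases hik : i ≤ k
    · obtain ⟨b, rfl⟩ := exists_fin_val_add_one_eq (mem_Icc.2 ⟨(mem_Icc.1 hi).1, hik⟩)
      refine ⟨(some b, !s), ⟨by simp, ?_⟩, rfl⟩
      rintro rfl
      exact (lt_irrefl _ hlt).elim
    · rcases p with _ | a
      · cases s
        · have : i < k + 1 + 0 := hlt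
          omega
        · refine ⟨(none, false), ⟨by simp, fun _ ↦ rfl⟩, ?_⟩
          have : i < k + 1 + 1 := hlt
          show k + 1 + 0 = i
          omega
      · have : i < a + 1 := hlt
        omega

lemma isGrundyColoring_starForest (hm : 2 ≤ m) :
    IsGrundyColoring (starForest m) 2 (starGrundyColoring m) := by
  have : Nontrivial (Fin m) := Fin.nontrivial_iff_two_le.2 hm
  obtain ⟨a, b, hab⟩ := exists_pair_ne (Fin m)
  refine ⟨⟨fun x ↦ ?_, fun x y h ↦ ?_, fun i hi ↦ ?_⟩, fun x i hi hlt ↦ ?_⟩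
  · unfold starGrundyColoring
    split_ifs <;> simp
  · rw [starForest_adj] at h
    unfold starGrundyColoring
    grind
  · obtain rfl | rfl : i = 1 ∨ i = 2 := by grind
    exacts [⟨(a, a), if_pos rfl⟩, ⟨(a, b), if_neg hab.symm⟩]
  · have hleaf : x.2 ≠ x.1 := by
      intro h
      rw [starGrundyColoring, if_pos h] at hlt
      grind
    obtain rfl : i = 1 := by
      rw [starGrundyColoring, if_neg hleaf] at hlt
      grind
    exact ⟨(x.1, x.1), starForest_adj.2 ⟨rfl, hleaf, .inr rfl⟩, if_pos rfl⟩

lemma isProperColoring_crownGraph_side :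
    IsProperColoring (crownGraph k) 2 fun x ↦ x.2.toNat + 1 := by
  refine ⟨fun x ↦ ?_, fun x y h ↦ ?_, fun i hi ↦ ?_⟩
  · simp [Bool.toNat_le]
  · rw [crownGraph_adj] at h
    cases hx : x.2 <;> cases hy : y.2 <;> simp_all
  · obtain rfl | rfl : i = 1 ∨ i = 2 := by grind
    exacts [⟨(none, false), rfl⟩, ⟨(none, true), rfl⟩]

lemma isBColoring_starForest : IsBColoring (starForest m) m fun x ↦ x.2 + 1 := by
  refine ⟨⟨fun x ↦ ?_, fun x y h ↦ ?_, fun i hi ↦ ?_⟩, fun i hi ↦ ?_⟩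
  · simp [Nat.succ_le_of_lt x.2.isLt]
  · rw [starForest_adj] at h
    simpa using Fin.val_injective.ne h.2.1
  · obtain ⟨a, rfl⟩ := exists_fin_val_add_one_eq hi
    exact ⟨(a, a), rfl⟩
  · obtain ⟨a, rfl⟩ := exists_fin_val_add_one_eq hi
    refine ⟨(a, a), rfl, fun j hj hji ↦ ?_⟩
    obtain ⟨b, rfl⟩ := exists_fin_val_add_one_eq hj
    exact ⟨(a, b), starForest_adj.2 ⟨rfl, fun h : a = b ↦ hji (h ▸ rfl), .inl rfl⟩, rfl⟩

end SimpleGraph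

theorem statement_5_general (n : ℕ) :
    ∃ (V : Type) (_ : Fintype V) (G : SimpleGraph V),
      n ≤ grundyNumber G ∧ n ≤ bNumber G ∧ zNumber G ≤ 3 := by
  refine ⟨_, inferInstance, crownGraph n ⊕g starForest (n + 2), ?_, ?_, ?_⟩
  · calc n ≤ max (n + 2) 2 := by omega
      _ ≤ _ := le_grundyNumber
          (isGrundyColoring_crownGraph.sum (isGrundyColoring_starForest le_add_self))
  · calc n ≤ n + 2 := by omega
      _ ≤ _ := le_bNumber
          (isProperColoring_crownGraph_side.sum_isBColoring isBColoring_starForest le_add_self)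
  · refine zNumber_le fun k c hc ↦ ?_
    have := (crownGraph_cherryDominated.sum starForest_cherryDominated).le_two_of_isZColoring hc
    omega

/-- For every positive integer `n` there exists a finite simple graph `G`
with `Γ(G) ≥ n`, `b(G) ≥ n` and `z(G) ≤ 3`. -/
theorem statement_5 (n : ℕ) (hn : 1 ≤ n) :
    ∃ (V : Type) (_ : Fintype V) (G : SimpleGraph V),
      n ≤ grundyNumber G ∧ n ≤ bNumber G ∧ zNumber G ≤ 3 :=
  statement_5_general n
end

section
/- For every integer t ≥ 1, the graph H_t = K_{t,t} \ (t−1)K_2, namely the bipartite graph with vertex parts {x_1,…,x_t} and {y_1,…,y_t} in which x_i is adjacent to y_j if and only if it is not the case that i = j ≤ t−1, satisfies Γ(H_t) = t + 1. -/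
/-- The base relation of the graph `H_t = K_{t,t} \ (t-1)K_2`: the left vertex `x_i`
is related to the right vertex `y_j` iff it is not the case that `i = j ≤ t-1`
(in 1-indexed terms; here `Fin t` is 0-indexed, so the condition `i = j ≤ t-1`
reads `i = j ∧ i + 1 < t`). -/
def HRel (t : ℕ) : (Fin t ⊕ Fin t) → (Fin t ⊕ Fin t) → Prop
  | Sum.inl i, Sum.inr j => ¬(i = j ∧ (i : ℕ) + 1 < t)
  | _, _ => False

/-- The graph `H_t = K_{t,t} \ (t-1)K_2`. -/
def Hgraph (t : ℕ) : SimpleGraph (Fin t ⊕ Fin t) := SimpleGraph.fromRel (HRel t)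

lemma Hadj (t : ℕ) (i j : Fin t) :
    (Hgraph t).Adj (Sum.inl i) (Sum.inr j) ↔ ¬((i : ℕ) = j ∧ (i : ℕ) + 1 < t) := by
  simp only [Hgraph, SimpleGraph.fromRel_adj, HRel]
  constructor
  · rintro ⟨-, h | h⟩ ⟨h1, h2⟩
    · exact h ⟨Fin.ext h1, h2⟩
    · exact h
  · intro h
    exact ⟨by simp, Or.inl fun ⟨h1, h2⟩ => h ⟨congrArg Fin.val h1, h2⟩⟩

def Hcol (t : ℕ) : (Fin t ⊕ Fin t) → ℕ
  | Sum.inl i => if (i : ℕ) + 1 < t then (i : ℕ) + 1 else t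
  | Sum.inr i => if (i : ℕ) + 1 < t then (i : ℕ) + 1 else t + 1

lemma Hcol_grundy (t : ℕ) (ht : 1 ≤ t) : IsGrundyColoring (Hgraph t) (t + 1) (Hcol t) := by
  have key : ∀ i j : Fin t, ¬((i : ℕ) = j ∧ (i : ℕ) + 1 < t) →
      Hcol t (Sum.inl i) ≠ Hcol t (Sum.inr j) := by
    intro i j hij
    have hi := i.isLt; have hj := j.isLt
    simp only [Hcol]; split <;> split <;> omega
  refine ⟨⟨?_, ?_, ?_⟩, ?_⟩
  · rintro (i | i) <;> have := i.isLt <;> simp only [Hcol] <;> split <;>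
      simp only [Finset.mem_Icc] <;> omega
  · intro u v huv
    rcases u with i | i <;> rcases v with j | j <;>
      simp only [Hgraph, SimpleGraph.fromRel_adj, HRel, false_or, or_false, or_self] at huv
    · exact absurd huv.2 not_false
    · exact key i j (fun ⟨h1, h2⟩ => huv.2 ⟨Fin.ext h1, h2⟩)
    · exact (key j i (fun ⟨h1, h2⟩ => huv.2 ⟨Fin.ext h1, h2⟩)).symm
    · exact absurd huv.2 not_false
  · intro i hi
    simp only [Finset.mem_Icc] at hi
    rcases lt_or_ge i t with h | h
    · exact ⟨Sum.inl ⟨i - 1, by omega⟩, by simp only [Hcol]; split <;> omega⟩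
    · -- i = t or i = t+1
      rcases eq_or_lt_of_le h with h' | h'
      · exact ⟨Sum.inl ⟨t - 1, by omega⟩, by simp only [Hcol]; split <;> omega⟩
      · exact ⟨Sum.inr ⟨t - 1, by omega⟩, by simp only [Hcol]; split <;> omega⟩
  · rintro (x | y) i hi hlt <;> simp only [Finset.mem_Icc] at hi <;>
      simp only [Hcol] at hlt
    · -- v = inl x, neighbor inr (i-1)
      have hx := x.isLt
      have hit : i < t := by split at hlt <;> omega
      refine ⟨Sum.inr ⟨i - 1, by omega⟩, (Hadj t x _).2 ?_, by simp only [Hcol]; split <;> omega⟩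
      rintro ⟨h1, h2⟩
      simp only at h1
      split at hlt <;> omega
    · have hy := y.isLt
      rcases lt_or_ge i t with hit | hit
      · -- neighbor inl (i-1), need ¬(i-1 = y ∧ i < t): i-1 ≠ y since Hcol (inr y) > i
        refine ⟨Sum.inl ⟨i - 1, by omega⟩, ((Hgraph t).adj_symm ((Hadj t _ y).2 ?_)),
          by simp only [Hcol]; split <;> omega⟩
        rintro ⟨h1, h2⟩
        simp only at h1
        split at hlt <;> omega
      · -- i = t, neighbor inl (t-1)
        have : i = t := by split at hlt <;> omega
        refine ⟨Sum.inl ⟨t - 1, by omega⟩, ((Hgraph t).adj_symm ((Hadj t _ y).2 ?_)),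
          by simp only [Hcol]; split <;> omega⟩
        rintro ⟨h1, h2⟩
        simp only at h2
        omega

lemma Hadj_cases {t : ℕ} {v w : Fin t ⊕ Fin t} (h : (Hgraph t).Adj v w) :
    ((∃ i, v = Sum.inl i) ∧ (∃ j, w = Sum.inr j)) ∨
    ((∃ i, v = Sum.inr i) ∧ (∃ j, w = Sum.inl j)) := by
  rcases v with i | i <;> rcases w with j | j <;>
    simp_all [Hgraph, SimpleGraph.fromRel_adj, HRel]

lemma grundy_le (t : ℕ) (ht : 1 ≤ t) {k : ℕ} {c : Fin t ⊕ Fin t → ℕ}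
    (hc : IsGrundyColoring (Hgraph t) k c) : k ≤ t + 1 := by
  by_contra hk
  push_neg at hk
  obtain ⟨v, hv⟩ := hc.1.2.2 k (by simp only [Finset.mem_Icc]; omega)
  classical
  have hP : ∀ i ∈ Finset.Icc 1 (k - 1), ∃ w, (Hgraph t).Adj v w ∧ c w = i := by
    intro i hi
    simp only [Finset.mem_Icc] at hi
    exact hc.2 v i (by simp only [Finset.mem_Icc]; omega) (by omega)
  set g : ℕ → Fin t ⊕ Fin t := fun i =>
    if h : ∃ w, (Hgraph t).Adj v w ∧ c w = i then h.choose else v with hg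
  have hgspec : ∀ i ∈ Finset.Icc 1 (k - 1), (Hgraph t).Adj v (g i) ∧ c (g i) = i := by
    intro i hi
    have h := hP i hi
    simp only [hg, dif_pos h]
    exact h.choose_spec
  have hcard : (Finset.Icc 1 (k - 1)).card ≤ (Finset.univ : Finset (Fin t)).card := by
    apply Finset.card_le_card_of_injOn (fun i => Sum.elim id id (g i))
      (fun i _ => Finset.mem_univ _)
    intro i hi i' hi' hii
    obtain ⟨hadj, hci⟩ := hgspec i hi
    obtain ⟨hadj', hci'⟩ := hgspec i' hi'
    rcases Hadj_cases hadj with ⟨⟨x, hx⟩, ⟨j, hj⟩⟩ | ⟨⟨x, hx⟩, ⟨j, hj⟩⟩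
    · rcases Hadj_cases hadj' with ⟨-, ⟨j', hj'⟩⟩ | ⟨⟨x', hx'⟩, -⟩
      · simp only [hj, hj', Sum.elim_inr, id] at hii
        rw [← hci, ← hci', hj, hj', hii]
      · rw [hx] at hx'; exact absurd hx' (by simp)
    · rcases Hadj_cases hadj' with ⟨⟨x', hx'⟩, -⟩ | ⟨-, ⟨j', hj'⟩⟩
      · rw [hx] at hx'; exact absurd hx' (by simp)
      · simp only [hj, hj', Sum.elim_inl, id] at hii
        rw [← hci, ← hci', hj, hj', hii]
  rw [Nat.card_Icc, Finset.card_univ, Fintype.card_fin] at hcard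
  omega

/-- For every `t ≥ 1`, `Γ(K_{t,t} \ (t-1)K_2) = t + 1`. -/
theorem statement_6 (t : ℕ) (ht : 1 ≤ t) : grundyNumber (Hgraph t) = t + 1 := by
  unfold grundyNumber
  apply le_antisymm
  · refine csSup_le ⟨t + 1, Hcol t, Hcol_grundy t ht⟩ ?_
    rintro k ⟨c, hc⟩
    exact grundy_le t ht hc
  · apply le_csSup
    · refine ⟨t + 1, ?_⟩
      rintro k ⟨c, hc⟩
      exact grundy_le t ht hc
    · exact ⟨Hcol t, Hcol_grundy t ht⟩
end

section
/- For every integer t ≥ 1, the graph H_t = K_{t,t} \ (t−1)K_2, namely the bipartite graph with vertex parts {x_1,…,x_t} and {y_1,…,y_t} in which x_i is adjacent to y_j if and only if it is not the case that i = j ≤ t−1, admits no color-dominating coloring (b-coloring) using more than 2 colors; that is, every b-coloring of H_t uses at most 2 colors. -/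
/-- For every `t ≥ 1`, every b-coloring of `H_t = K_{t,t} \ (t-1)K_2`
uses at most 2 colors. -/
theorem statement_7 (t : ℕ) (ht : 1 ≤ t) (k : ℕ) (c : (Fin t ⊕ Fin t) → ℕ)
    (hc : IsBColoring (Hgraph t) k c) : k ≤ 2 := by
  by_contra hk
  push_neg at hk
  obtain ⟨⟨hmem, hadj, _⟩, hcd⟩ := hc
  set p : Fin t := ⟨t - 1, by omega⟩ with hpdef
  -- x_p is adjacent to every y_j
  have hp1 : ∀ j : Fin t, (Hgraph t).Adj (Sum.inl p) (Sum.inr j) := by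
    intro j
    rw [Hgraph, SimpleGraph.fromRel_adj]
    refine ⟨by simp, Or.inl ?_⟩
    show ¬(p = j ∧ (p : ℕ) + 1 < t)
    rintro ⟨-, h2⟩
    simp only [hpdef] at h2
    omega
  -- every x_i is adjacent to y_p
  have hp2 : ∀ i : Fin t, (Hgraph t).Adj (Sum.inl i) (Sum.inr p) := by
    intro i
    rw [Hgraph, SimpleGraph.fromRel_adj]
    refine ⟨by simp, Or.inl ?_⟩
    show ¬(i = p ∧ (i : ℕ) + 1 < t)
    rintro ⟨h1, h2⟩
    subst h1
    simp only [hpdef] at h2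
    omega
  -- no same-side adjacency
  have hside : ∀ a b : Fin t, ¬ (Hgraph t).Adj (Sum.inl a) (Sum.inl b) := by
    intro a b h
    rw [Hgraph, SimpleGraph.fromRel_adj] at h
    rcases h.2 with h | h <;> exact h
  have hside' : ∀ a b : Fin t, ¬ (Hgraph t).Adj (Sum.inr a) (Sum.inr b) := by
    intro a b h
    rw [Hgraph, SimpleGraph.fromRel_adj] at h
    rcases h.2 with h | h <;> exact h
  set α := c (Sum.inl p) with hα
  set β := c (Sum.inr p) with hβ
  have hαm := hmem (Sum.inl p)
  have hβm := hmem (Sum.inr p)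
  simp only [Finset.mem_Icc] at hαm hβm
  -- pick a third color γ
  obtain ⟨γ, hγ1, hγk, hγα, hγβ⟩ : ∃ γ, 1 ≤ γ ∧ γ ≤ k ∧ γ ≠ α ∧ γ ≠ β := by
    by_cases h1 : 1 ≠ α ∧ 1 ≠ β
    · exact ⟨1, le_refl 1, by omega, h1.1, h1.2⟩
    by_cases h2 : 2 ≠ α ∧ 2 ≠ β
    · exact ⟨2, by omega, by omega, h2.1, h2.2⟩
    push_neg at h1 h2
    exact ⟨3, by omega, by omega, by omega, by omega⟩
  obtain ⟨v, hvγ, hv⟩ := hcd γ (Finset.mem_Icc.mpr ⟨hγ1, hγk⟩)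
  rcases v with i | i
  · -- v = x_i needs a neighbor of color α, but α appears only on the left
    obtain ⟨w, hw, hwα⟩ := hv α (Finset.mem_Icc.mpr ⟨hαm.1, hαm.2⟩)
      (by rw [hvγ]; exact Ne.symm hγα)
    rcases w with j | j
    · exact hside i j hw
    · exact hadj _ _ (hp1 j) (by rw [← hα, hwα])
  · -- v = y_i needs a neighbor of color β, but β appears only on the right
    obtain ⟨w, hw, hwβ⟩ := hv β (Finset.mem_Icc.mpr ⟨hβm.1, hβm.2⟩)
      (by rw [hvγ]; exact Ne.symm hγβ)
    rcases w with j | j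
    · exact hadj _ _ (hp2 j) (by rw [← hβ, hwβ])
    · exact hside' i j hw
end

section
/- For every integer t ≥ 3, there exist a finite simple graph G and an induced subgraph H of G such that z(G) = 2 and z(H) = t. In particular, the z-chromatic number is not monotone under taking induced subgraphs. -/
/-! The graph `G` is `K_{t+1,t+1}` minus a perfect matching (a crown graph) with one matching edge
`xy` put back. Then `x` and `y` dominate the two sides, so every neighborhood lies in
`N(x)` or in `N(y)`, and a color-dominating vertex of a color other than `c x`, `c y` is
impossible: `z(G) = 2`. Deleting `x` and `y` leaves the crown graph on `2t` vertices, which is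
`(t-1)`-regular, so `z ≤ t`, and coloring both copies of `i` by `i + 1` makes every vertex
color-dominating, so `z = t`. -/

open Finset SimpleGraph

section Transport

variable {V W : Type*} {G : SimpleGraph V} {G' : SimpleGraph W} {k : ℕ} {c : W → ℕ}

lemma IsProperColoring.comp_iso (h : IsProperColoring G' k c) (e : G ≃g G') :
    IsProperColoring G k (c ∘ e) := by
  obtain ⟨hrange, hadj, hsurj⟩ := h
  refine ⟨fun v => hrange (e v), fun u v huv => hadj _ _ (e.map_adj_iff.2 huv), fun i hi => ?_⟩
  obtain ⟨w, rfl⟩ := hsurj i hi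
  exact ⟨e.symm w, by simp⟩

lemma IsCDVertex.comp_iso {v : V} (e : G ≃g G') (h : IsCDVertex G' k c (e v)) :
    IsCDVertex G k (c ∘ e) v := by
  intro j hj hne
  obtain ⟨w, hvw, rfl⟩ := h j hj hne
  exact ⟨e.symm w, by simpa using e.symm.map_adj_iff.2 hvw, by simp⟩

lemma IsGrundyColoring.comp_iso (h : IsGrundyColoring G' k c) (e : G ≃g G') :
    IsGrundyColoring G k (c ∘ e) := by
  refine ⟨h.1.comp_iso e, fun v i hi hlt => ?_⟩
  obtain ⟨w, hvw, rfl⟩ := h.2 (e v) i hi hlt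
  exact ⟨e.symm w, by simpa using e.symm.map_adj_iff.2 hvw, by simp⟩

lemma IsBColoring.comp_iso (h : IsBColoring G' k c) (e : G ≃g G') :
    IsBColoring G k (c ∘ e) := by
  refine ⟨h.1.comp_iso e, fun i hi => ?_⟩
  obtain ⟨w, rfl, hw⟩ := h.2 i hi
  exact ⟨e.symm w, by simp, .comp_iso e (by simpa using hw)⟩

lemma IsZColoring.comp_iso (h : IsZColoring G' k c) (e : G ≃g G') :
    IsZColoring G k (c ∘ e) := by
  obtain ⟨hgrundy, hb, u, hu, hadj⟩ := h
  refine ⟨hgrundy.comp_iso e, hb.comp_iso e, e.symm ∘ u, fun j hj => ?_, fun j hj hjk => ?_⟩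
  · exact ⟨by simpa using (hu j hj).1, .comp_iso e (by simpa using (hu j hj).2)⟩
  · simpa using e.symm.map_adj_iff.2 (hadj j hj hjk)

lemma zNumber_congr (e : G ≃g G') : zNumber G = zNumber G' := by
  unfold zNumber
  congr 1
  ext k
  exact ⟨fun ⟨c, hc⟩ => ⟨c ∘ e.symm, hc.comp_iso e.symm⟩,
    fun ⟨c, hc⟩ => ⟨c ∘ e, hc.comp_iso e⟩⟩

end Transport

section Coloring

variable {V : Type*} {G : SimpleGraph V} {k : ℕ} {c : V → ℕ}

lemma zNumber_eq_of_isZColoring (hc : IsZColoring G k c)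
    (hle : ∀ k' (c' : V → ℕ), IsZColoring G k' c' → k' ≤ k) : zNumber G = k :=
  IsGreatest.csSup_eq ⟨⟨c, hc⟩, fun k' ⟨c', hc'⟩ => hle k' c' hc'⟩

lemma isZColoring_of_forall_isCDVertex (hc : IsProperColoring G k c)
    (hcd : ∀ v, IsCDVertex G k c v) (hk : 0 < k) : IsZColoring G k c := by
  have hkk : k ∈ Icc 1 k := mem_Icc.2 ⟨hk, le_rfl⟩
  obtain ⟨v, hv⟩ := hc.2.2 k hkk
  have hnbr : ∀ j, ∃ w, j ∈ Icc 1 k → j ≠ k → G.Adj v w ∧ c w = j := fun j => by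
    by_cases hj : j ∈ Icc 1 k ∧ j ≠ k
    · obtain ⟨w, hvw, hw⟩ := hcd v j hj.1 (hv ▸ hj.2)
      exact ⟨w, fun _ _ => ⟨hvw, hw⟩⟩
    · exact ⟨v, fun h h' => absurd ⟨h, h'⟩ hj⟩
  choose w hw using hnbr
  refine ⟨⟨hc, fun v i hi hlt => hcd v i hi hlt.ne⟩, ⟨hc, fun i hi => ?_⟩,
    fun j => if j = k then v else w j, fun j hj => ?_, fun j hj hjk => ?_⟩
  · obtain ⟨v, rfl⟩ := hc.2.2 i hi
    exact ⟨v, rfl, hcd v⟩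
  · dsimp only
    split_ifs with hjk
    · exact ⟨hjk ▸ hv, hcd v⟩
    · exact ⟨(hw j hj hjk).2, hcd _⟩
  · simpa [hjk] using (hw j hj hjk).1

lemma IsProperColoring.isCDVertex_of_adj (hc : IsProperColoring G 2 c) {v w : V}
    (hvw : G.Adj v w) : IsCDVertex G 2 c v := by
  intro j hj hjv
  refine ⟨w, hvw, ?_⟩
  have := hc.2.1 v w hvw
  have := hc.1 v
  have := hc.1 w
  simp only [mem_Icc] at *
  omega

lemma IsCDVertex.le_degree_add_one {v : V} [Fintype (G.neighborSet v)] (hv : IsCDVertex G k c v)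
    (hcv : c v ∈ Icc 1 k) : k ≤ G.degree v + 1 := by
  have hsub : (Icc 1 k).erase (c v) ⊆ (G.neighborFinset v).image c := by
    intro j hj
    obtain ⟨hjv, hj⟩ := mem_erase.1 hj
    obtain ⟨w, hvw, rfl⟩ := hv j hj hjv
    exact mem_image_of_mem c ((G.mem_neighborFinset v w).2 hvw)
  have := (card_le_card hsub).trans card_image_le
  rw [card_erase_of_mem hcv, Nat.card_Icc, card_neighborFinset_eq_degree] at this
  omega

lemma IsBColoring.le_maxDegree_add_one [Fintype V] [DecidableRel G.Adj] (hc : IsBColoring G k c) :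
    k ≤ G.maxDegree + 1 := by
  rcases Nat.eq_zero_or_pos k with rfl | hk
  · exact Nat.zero_le _
  obtain ⟨v, -, hcd⟩ := hc.2 1 (mem_Icc.2 ⟨le_rfl, hk⟩)
  exact (hcd.le_degree_add_one (hc.1.1 v)).trans
    (Nat.add_le_add_right (G.degree_le_maxDegree v) 1)

lemma IsBColoring.le_two_of_forall_neighborSet_subset {x y : V}
    (hxy : ∀ v, G.neighborSet v ⊆ G.neighborSet x ∨ G.neighborSet v ⊆ G.neighborSet y)
    (hc : IsBColoring G k c) : k ≤ 2 := by
  by_contra! hk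
  obtain ⟨hrange, hproper, -⟩ := hc.1
  obtain ⟨m, hm, hmx, hmy⟩ : ∃ m ∈ Icc 1 k, m ≠ c x ∧ m ≠ c y := by
    have := hrange x
    have := hrange y
    simp only [mem_Icc] at *
    by_cases h1 : 1 ≠ c x ∧ 1 ≠ c y
    · exact ⟨1, by omega, h1⟩
    by_cases h2 : 2 ≠ c x ∧ 2 ≠ c y
    · exact ⟨2, by omega, h2⟩
    · exact ⟨3, by omega, by omega, by omega⟩
  obtain ⟨v, rfl, hv⟩ := hc.2 m hm
  rcases hxy v with hsub | hsub
  · obtain ⟨w, hvw, hw⟩ := hv (c x) (hrange x) hmx.symm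
    exact hproper x w (hsub hvw) hw.symm
  · obtain ⟨w, hvw, hw⟩ := hv (c y) (hrange y) hmy.symm
    exact hproper y w (hsub hvw) hw.symm

end Coloring

lemma isProperColoring_sumElim {α β : Type*} [Nonempty α] [Nonempty β]
    {G : SimpleGraph (α ⊕ β)} (hG : G ≤ completeBipartiteGraph α β) :
    IsProperColoring G 2 (Sum.elim (fun _ => 1) (fun _ => 2)) := by
  refine ⟨by rintro (a | b) <;> simp, fun u v huv => ?_, fun i hi => ?_⟩
  · have := hG huv
    rcases u with a | b <;> rcases v with a' | b' <;> simp_all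
  · obtain rfl | rfl : i = 1 ∨ i = 2 := by simp only [mem_Icc] at hi; omega
    · exact ⟨.inl (Classical.arbitrary α), rfl⟩
    · exact ⟨.inr (Classical.arbitrary β), rfl⟩

namespace SimpleGraph

lemma bipartiteDoubleCover_degree {V : Type*} [Fintype V] [DecidableEq V] (G : SimpleGraph V)
    [DecidableRel G.Adj] (v : V ⊕ V) :
    G.bipartiteDoubleCover.degree v = G.degree (v.elim id id) := by
  rw [← card_neighborFinset_eq_degree, ← card_neighborFinset_eq_degree]
  rcases v with v | v
  · have : G.bipartiteDoubleCover.neighborFinset (.inl v) = (G.neighborFinset v).map .inr := by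
      ext (w | w) <;> rw [mem_neighborFinset] <;> simp
    rw [this, card_map]
    rfl
  · have : G.bipartiteDoubleCover.neighborFinset (.inr v) = (G.neighborFinset v).map .inl := by
      ext (w | w) <;> rw [mem_neighborFinset] <;> simp [adj_comm]
    rw [this, card_map]
    rfl

/-- The double cover of `K_n` is the crown graph `K_{n,n}` minus a perfect matching. -/
lemma zNumber_bipartiteDoubleCover_completeGraph {n : ℕ} (hn : 0 < n) :
    zNumber (completeGraph (Fin n)).bipartiteDoubleCover = n := by
  set c : Fin n ⊕ Fin n → ℕ := Sum.elim (fun i => i + 1) (fun i => i + 1)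
  have hc : IsProperColoring (completeGraph (Fin n)).bipartiteDoubleCover n c := by
    refine ⟨by rintro (i | i) <;> simp [c], ?_, fun j hj => ?_⟩
    · rintro (i | i) (i' | i') h <;> simp_all [c, Fin.val_eq_val]
    · simp only [mem_Icc] at hj
      exact ⟨.inl ⟨j - 1, by omega⟩, by simp [c]; omega⟩
  have hcd : ∀ v, IsCDVertex (completeGraph (Fin n)).bipartiteDoubleCover n c v := by
    intro v j hj hjv
    simp only [mem_Icc] at hj
    rcases v with i | i
    · refine ⟨.inr ⟨j - 1, by omega⟩, ?_, by simp [c]; omega⟩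
      simp [c, Fin.ext_iff] at hjv ⊢
      omega
    · refine ⟨.inl ⟨j - 1, by omega⟩, ?_, by simp [c]; omega⟩
      simp [c, Fin.ext_iff] at hjv ⊢
      omega
  have hdeg : (completeGraph (Fin n)).bipartiteDoubleCover.maxDegree ≤ n - 1 :=
    maxDegree_le_of_forall_degree_le _ _ fun v => by
      rw [bipartiteDoubleCover_degree, complete_graph_degree, Fintype.card_fin]
  refine zNumber_eq_of_isZColoring (isZColoring_of_forall_isCDVertex hc hcd hn)
    fun k c' hc' => hc'.2.1.le_maxDegree_add_one.trans ?_
  omega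

end SimpleGraph

/-- The crown graph on `Option (Fin n) ⊕ Option (Fin n)` with the edge between the two copies
of `none` added back; `inl none` and `inr none` are then adjacent to the whole opposite side. -/
def apexCrownGraph (n : ℕ) : SimpleGraph (Option (Fin n) ⊕ Option (Fin n)) :=
  (completeGraph (Option (Fin n))).bipartiteDoubleCover ⊔ edge (.inl none) (.inr none)

lemma apexCrownGraph_le (n : ℕ) :
    apexCrownGraph n ≤ completeBipartiteGraph (Option (Fin n)) (Option (Fin n)) := by
  refine sup_le bipartiteDoubleCover_le fun u v huv => ?_
  rw [edge_adj] at huv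
  rcases huv with ⟨⟨rfl, rfl⟩ | ⟨rfl, rfl⟩, -⟩ <;> simp

lemma apexCrownGraph_adj_inr_none (n : ℕ) (p : Option (Fin n)) :
    (apexCrownGraph n).Adj (.inl p) (.inr none) := by
  cases p <;> simp [apexCrownGraph, edge_adj]

lemma apexCrownGraph_adj_inl_none (n : ℕ) (q : Option (Fin n)) :
    (apexCrownGraph n).Adj (.inr q) (.inl none) := by
  cases q <;> simp [apexCrownGraph, edge_adj]

lemma apexCrownGraph_neighborSet_subset (n : ℕ) (v : Option (Fin n) ⊕ Option (Fin n)) :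
    (apexCrownGraph n).neighborSet v ⊆ (apexCrownGraph n).neighborSet (.inr none) ∨
      (apexCrownGraph n).neighborSet v ⊆ (apexCrownGraph n).neighborSet (.inl none) := by
  rcases v with p | q
  · refine .inr fun w hw => ?_
    rcases w with p' | q'
    · simpa using apexCrownGraph_le n hw
    · exact (apexCrownGraph_adj_inl_none n q').symm
  · refine .inl fun w hw => ?_
    rcases w with p' | q'
    · exact (apexCrownGraph_adj_inr_none n p').symm
    · simpa using apexCrownGraph_le n hw

lemma zNumber_apexCrownGraph (n : ℕ) : zNumber (apexCrownGraph n) = 2 := by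
  have hc := isProperColoring_sumElim (apexCrownGraph_le n)
  refine zNumber_eq_of_isZColoring (isZColoring_of_forall_isCDVertex hc (fun v => ?_) two_pos)
    fun k c h => h.2.1.le_two_of_forall_neighborSet_subset (apexCrownGraph_neighborSet_subset n)
  rcases v with p | q
  · exact hc.isCDVertex_of_adj (apexCrownGraph_adj_inr_none n p)
  · exact hc.isCDVertex_of_adj (apexCrownGraph_adj_inl_none n q)

def crownEmbedding (n : ℕ) :
    (completeGraph (Fin n)).bipartiteDoubleCover ↪g apexCrownGraph n where
  toEmbedding := .sumMap .some .some
  map_rel_iff' {u v} := by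
    rcases u with i | i <;> rcases v with j | j <;> simp [apexCrownGraph, edge_adj]

/-- For every `t ≥ 3` there are a finite simple graph `G` and an induced
subgraph `H` of `G` with `z(G) = 2` and `z(H) = t`; the z-chromatic number is not
monotone under taking induced subgraphs. -/
theorem statement_11 (t : ℕ) (ht : 3 ≤ t) :
    ∃ (V : Type) (_ : Fintype V) (G : SimpleGraph V) (s : Set V),
      zNumber G = 2 ∧ zNumber (G.induce s) = t := by
  refine ⟨_, inferInstance, apexCrownGraph t, Set.range (crownEmbedding t),
    zNumber_apexCrownGraph t, ?_⟩
  rw [← zNumber_congr (crownEmbedding t).isoInduceRange]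
  exact zNumber_bipartiteDoubleCover_completeGraph (by omega)
end

section
/- If a finite simple graph G admits a z-coloring using at least 3 colors, then G contains a triangle K_3 as a subgraph or a path on 5 vertices as a subgraph (not necessarily induced). -/
/-- `G` contains a (not necessarily induced) copy of `H` as a subgraph. -/
def ContainsSubgraphCopy {α : Type*} {V : Type*} (H : SimpleGraph α) (G : SimpleGraph V) :
    Prop :=
  ∃ f : α → V, Function.Injective f ∧ ∀ a b, H.Adj a b → G.Adj (f a) (f b)

/-- `G` contains an induced copy of `H`. -/
def ContainsInducedCopy {α : Type*} {V : Type*} (H : SimpleGraph α) (G : SimpleGraph V) :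
    Prop :=
  ∃ f : α → V, Function.Injective f ∧ ∀ a b, H.Adj a b ↔ G.Adj (f a) (f b)

/-- If a finite simple graph admits a z-coloring using at least 3 colors,
then it contains a triangle `K_3` or a path on 5 vertices as a (not necessarily induced)
subgraph. -/
theorem statement_14 {V : Type*} [Fintype V] (G : SimpleGraph V) (k : ℕ) (c : V → ℕ)
    (hk : 3 ≤ k) (hc : IsZColoring G k c) :
    ContainsSubgraphCopy (⊤ : SimpleGraph (Fin 3)) G ∨
      ContainsSubgraphCopy (SimpleGraph.pathGraph 5) G := by
  obtain ⟨hg, hb, u, hu, hadj⟩ := hc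
  have h1k : (1:ℕ) ∈ Finset.Icc 1 k := by simp; omega
  have h2k : (2:ℕ) ∈ Finset.Icc 1 k := by simp; omega
  have hkk : k ∈ Finset.Icc 1 k := by simp; omega
  obtain ⟨hc1, hcd1⟩ := hu 1 h1k
  obtain ⟨hc2, hcd2⟩ := hu 2 h2k
  obtain ⟨hck, hcdk⟩ := hu k hkk
  have a1 : G.Adj (u k) (u 1) := hadj 1 h1k (by omega)
  have a2 : G.Adj (u k) (u 2) := hadj 2 h2k (by omega)
  have hne : ∀ {p q : V}, c p ≠ c q → p ≠ q := fun h e => h (by rw [e])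
  by_cases h12 : G.Adj (u 1) (u 2)
  · left
    refine ⟨![u k, u 1, u 2], ?_, ?_⟩
    · intro a b hab
      fin_cases a <;> fin_cases b <;> simp_all <;>
        first
        | rfl
        | (exact absurd (congrArg c hab) (by omega))
    · intro a b hab
      fin_cases a <;> fin_cases b <;> simp_all [SimpleGraph.top_adj] <;>
        first
        | exact a1
        | exact a1.symm
        | exact a2
        | exact a2.symm
        | exact h12
        | exact h12.symm
  · right
    obtain ⟨x, hx1, hx2⟩ := hcd1 2 h2k (by omega)
    obtain ⟨y, hy1, hy2⟩ := hcd2 1 h1k (by omega)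
    have hxu2 : x ≠ u 2 := fun e => h12 (e ▸ hx1)
    have hyu1 : y ≠ u 1 := fun e => h12 ((e ▸ hy1).symm)
    have d1 : x ≠ u 1 := hne (by rw [hx2, hc1]; omega)
    have d2 : x ≠ u k := hne (by rw [hx2, hck]; omega)
    have d3 : x ≠ y := hne (by rw [hx2, hy2]; omega)
    have d4 : u 1 ≠ u k := hne (by rw [hc1, hck]; omega)
    have d5 : u k ≠ u 2 := hne (by rw [hck, hc2]; omega)
    have d6 : u k ≠ y := hne (by rw [hck, hy2]; omega)
    have d7 : u 2 ≠ y := hne (by rw [hc2, hy2]; omega)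
    have d8 : u 1 ≠ u 2 := hne (by rw [hc1, hc2]; omega)
    refine ⟨![x, u 1, u k, u 2, y], ?_, ?_⟩
    · intro a b hab
      fin_cases a <;> fin_cases b <;>
        first
        | rfl
        | exact absurd hab d1
        | exact absurd hab d1.symm
        | exact absurd hab d2
        | exact absurd hab d2.symm
        | exact absurd hab d3
        | exact absurd hab d3.symm
        | exact absurd hab d4
        | exact absurd hab d4.symm
        | exact absurd hab d5
        | exact absurd hab d5.symm
        | exact absurd hab d6
        | exact absurd hab d6.symm
        | exact absurd hab d7
        | exact absurd hab d7.symm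
        | exact absurd hab d8
        | exact absurd hab d8.symm
        | exact absurd hab hxu2
        | exact absurd hab hxu2.symm
        | exact absurd hab hyu1
        | exact absurd hab hyu1.symm
    · intro a b hab
      rw [SimpleGraph.pathGraph_adj] at hab
      fin_cases a <;> fin_cases b <;>
        first
        | exact absurd hab (by decide)
        | exact hx1
        | exact hx1.symm
        | exact a1
        | exact a1.symm
        | exact a2
        | exact a2.symm
        | exact hy1
        | exact hy1.symm
end

section
/- Let G be a finite simple graph that contains no triangle K_3 as a subgraph and no induced path on 5 vertices. Then z(G) ≤ 3; that is, every z-coloring of G uses at most 3 colors. -/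
lemma aux_tri {V : Type*} {G : SimpleGraph V}
    (hK3 : ¬ ContainsSubgraphCopy (⊤ : SimpleGraph (Fin 3)) G)
    (a b c : V) (hab : G.Adj a b) (hac : G.Adj a c) (hbc : G.Adj b c) : False := by
  apply hK3
  refine ⟨![a, b, c], ?_, ?_⟩
  · have h1 := hab.ne
    have h2 := hac.ne
    have h3 := hbc.ne
    intro i j hij
    fin_cases i <;> fin_cases j <;> simp_all
  · intro i j hij
    fin_cases i <;> fin_cases j <;>
      simp_all [hab.symm, hac.symm, hbc.symm]

lemma aux_noP5 {V : Type*} {G : SimpleGraph V}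
    (hP5 : ¬ ContainsInducedCopy (SimpleGraph.pathGraph 5) G)
    (a b c d e : V)
    (hab : G.Adj a b) (hbc : G.Adj b c) (hcd : G.Adj c d) (hde : G.Adj d e)
    (hac : ¬ G.Adj a c) (had : ¬ G.Adj a d) (hae : ¬ G.Adj a e)
    (hbd : ¬ G.Adj b d) (hbe : ¬ G.Adj b e) (hce : ¬ G.Adj c e) : False := by
  have hca : ¬ G.Adj c a := fun h => hac h.symm
  have hda : ¬ G.Adj d a := fun h => had h.symm
  have hea : ¬ G.Adj e a := fun h => hae h.symm
  have hdb : ¬ G.Adj d b := fun h => hbd h.symm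
  have heb : ¬ G.Adj e b := fun h => hbe h.symm
  have hec : ¬ G.Adj e c := fun h => hce h.symm
  have nab : a ≠ b := hab.ne
  have nac : a ≠ c := by rintro rfl; exact had hcd
  have nad : a ≠ d := by rintro rfl; exact hae hde
  have nae : a ≠ e := by rintro rfl; exact had hde.symm
  have nbc : b ≠ c := hbc.ne
  have nbd : b ≠ d := by rintro rfl; exact had hab
  have nbe : b ≠ e := by rintro rfl; exact hae hab
  have ncd : c ≠ d := hcd.ne
  have nce : c ≠ e := by rintro rfl; exact hbe hbc
  have nde : d ≠ e := hde.ne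
  apply hP5
  refine ⟨![a, b, c, d, e], ?_, ?_⟩
  · intro i j hij
    fin_cases i <;> fin_cases j <;> simp_all
  · intro i j
    fin_cases i <;> fin_cases j <;>
      simp_all [SimpleGraph.pathGraph_adj, hab.symm, hbc.symm, hcd.symm, hde.symm] <;> decide

/-- If a finite simple graph contains no triangle `K_3` as a subgraph and
no induced path on 5 vertices, then every z-coloring of it uses at most 3 colors,
i.e. `z(G) ≤ 3`. -/
theorem statement_15 {V : Type*} [Fintype V] (G : SimpleGraph V)
    (hK3 : ¬ ContainsSubgraphCopy (⊤ : SimpleGraph (Fin 3)) G)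
    (hP5 : ¬ ContainsInducedCopy (SimpleGraph.pathGraph 5) G) :
    ∀ (k : ℕ) (c : V → ℕ), IsZColoring G k c → k ≤ 3 := by
  intro k c hz
  by_contra hk
  push_neg at hk
  obtain ⟨hg, hb, u, hu, hukadj⟩ := hz
  obtain ⟨⟨hmem, hproper, hsurj⟩, hgr⟩ := hg
  have tri3 := aux_tri hK3
  have noP5 := aux_noP5 hP5
  have nadjc : ∀ a b : V, c a = c b → ¬ G.Adj a b := fun a b h hadj => hproper a b hadj h
  have h1 : (1 : ℕ) ∈ Finset.Icc 1 k := by rw [Finset.mem_Icc]; omega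
  have h2 : (2 : ℕ) ∈ Finset.Icc 1 k := by rw [Finset.mem_Icc]; omega
  have h3 : (3 : ℕ) ∈ Finset.Icc 1 k := by rw [Finset.mem_Icc]; omega
  have hkk : k ∈ Finset.Icc 1 k := by rw [Finset.mem_Icc]; omega
  obtain ⟨cu1, cd1⟩ := hu 1 h1
  obtain ⟨cu2, cd2⟩ := hu 2 h2
  obtain ⟨cu3, cd3⟩ := hu 3 h3
  have huk1 : G.Adj (u k) (u 1) := hukadj 1 h1 (by omega)
  have huk2 : G.Adj (u k) (u 2) := hukadj 2 h2 (by omega)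
  have huk3 : G.Adj (u k) (u 3) := hukadj 3 h3 (by omega)
  obtain ⟨x, hx1, hx2⟩ := cd1 2 h2 (by rw [cu1]; omega)
  obtain ⟨y, hy1, hy2⟩ := cd2 1 h1 (by rw [cu2]; omega)
  by_cases hxy : G.Adj x y
  · -- C5 case: u_k - u_1 - x - y - u_2 - u_k is an induced C5
    by_cases h3x : G.Adj (u 3) x
    · -- u_3 attached to x
      obtain ⟨z, hz1, hz2⟩ := cd3 1 h1 (by rw [cu3]; omega)
      by_cases hzu2 : G.Adj z (u 2)
      · exact noP5 z (u 2) y x (u 1) hzu2 hy1 hxy.symm hx1.symm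
          (nadjc z y (hz2.trans hy2.symm))
          (fun h => tri3 (u 3) z x hz1 h3x h)
          (nadjc z (u 1) (hz2.trans cu1.symm))
          (nadjc (u 2) x (cu2.trans hx2.symm))
          (fun h => tri3 (u k) (u 2) (u 1) huk2 huk1 h)
          (nadjc y (u 1) (hy2.trans cu1.symm))
      · exact noP5 z (u 3) (u k) (u 2) y hz1.symm huk3.symm huk2 hy1
          (fun h => tri3 (u 3) z (u k) hz1 huk3.symm h)
          hzu2
          (nadjc z y (hz2.trans hy2.symm))
          (fun h => tri3 (u k) (u 3) (u 2) huk3 huk2 h)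
          (fun h => tri3 x (u 3) y h3x.symm hxy h)
          (fun h => tri3 (u 2) (u k) y huk2.symm hy1 h)
    · by_cases h3y : G.Adj (u 3) y
      · -- u_3 attached to y
        obtain ⟨w, hw1, hw2⟩ := cd3 2 h2 (by rw [cu3]; omega)
        by_cases hwu1 : G.Adj w (u 1)
        · exact noP5 w (u 1) x y (u 2) hwu1 hx1 hxy hy1.symm
            (nadjc w x (hw2.trans hx2.symm))
            (fun h => tri3 (u 3) w y hw1 h3y h)
            (nadjc w (u 2) (hw2.trans cu2.symm))
            (nadjc (u 1) y (cu1.trans hy2.symm))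
            (fun h => tri3 (u k) (u 1) (u 2) huk1 huk2 h)
            (nadjc x (u 2) (hx2.trans cu2.symm))
        · exact noP5 w (u 3) (u k) (u 1) x hw1.symm huk3.symm huk1 hx1
            (fun h => tri3 (u 3) w (u k) hw1 huk3.symm h)
            hwu1
            (nadjc w x (hw2.trans hx2.symm))
            (fun h => tri3 (u k) (u 3) (u 1) huk3 huk1 h)
            h3x
            (fun h => tri3 (u 1) (u k) x huk1.symm hx1 h)
      · -- u_3 attached only to u_k
        exact noP5 (u 3) (u k) (u 1) x y huk3.symm huk1 hx1 hxy
          (fun h => tri3 (u k) (u 3) (u 1) huk3 huk1 h)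
          h3x h3y
          (fun h => tri3 (u 1) (u k) x huk1.symm hx1 h)
          (fun h => tri3 (u 2) (u k) y huk2.symm hy1 h)
          (nadjc (u 1) y (cu1.trans hy2.symm))
  · -- induced P5: x - u_1 - u_k - u_2 - y
    exact noP5 x (u 1) (u k) (u 2) y hx1.symm huk1.symm huk2 hy1
      (fun h => tri3 (u 1) x (u k) hx1 huk1.symm h)
      (nadjc x (u 2) (hx2.trans cu2.symm))
      hxy
      (fun h => tri3 (u k) (u 1) (u 2) huk1 huk2 h)
      (nadjc (u 1) y (cu1.trans hy2.symm))
      (fun h => tri3 (u 2) (u k) y huk2.symm hy1 h)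
end

section
/- Let T be a finite tree (a connected acyclic simple graph) that admits a z-coloring using k colors. Then the number of vertices of T satisfies |V(T)| ≥ (k−3)·2^{k−1} + k + 2 (an inequality of integers). -/
/-!
Root the tree at `u k`. Each `u j`, `j < k`, is a child of the root and, being color-dominating,
has a child of every color `i ∉ {j, k}`. In a Grundy coloring a vertex of color `i` has a child of
every color below `i` other than its parent's, so by induction the subtree below a vertex of
color `i` whose parent has a larger color has at least `2 ^ (i - 1)` vertices. These subtrees are
pairwise disjoint, and adding up their sizes gives exactly `(k - 3) 2 ^ (k - 1) + k + 2`.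
-/

open Finset

namespace SimpleGraph

variable {V : Type*} {G : SimpleGraph V}

theorem IsTree.eq_of_adj_of_dist_eq_add_one (hT : G.IsTree) {r p q v : V}
    (hp : G.Adj p v) (hq : G.Adj q v)
    (hdp : G.dist r v = G.dist r p + 1) (hdq : G.dist r v = G.dist r q + 1) : p = q := by
  obtain ⟨P, -, hP⟩ := hT.connected.exists_path_of_dist r p
  obtain ⟨Q, -, hQ⟩ := hT.connected.exists_path_of_dist r q
  have hPv : (P.concat hp).IsPath := (P.concat hp).isPath_of_length_eq_dist (by simp [hP, hdp])
  have hQv : (Q.concat hq).IsPath := (Q.concat hq).isPath_of_length_eq_dist (by simp [hQ, hdq])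
  exact (Walk.concat_inj ((hT.existsUnique_path r v).unique hPv hQv)).1

theorem IsTree.dist_eq_add_one_of_adj_of_ne (hT : G.IsTree) {r p v w : V}
    (hpv : G.Adj p v) (hd : G.dist r v = G.dist r p + 1) (hvw : G.Adj v w) (hwp : w ≠ p) :
    G.dist r w = G.dist r v + 1 :=
  (hT.dist_eq_dist_add_one_of_adj r hvw).resolve_left
    fun h ↦ hwp (hT.eq_of_adj_of_dist_eq_add_one hvw.symm hpv h hd)

variable [Fintype V]

/-- The vertices `w` such that `v` lies on a geodesic from `r` to `w`: in a tree rooted at `r`,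
the subtree hanging from `v`. -/
noncomputable def descendants (G : SimpleGraph V) (r v : V) : Finset V :=
  {w | G.dist r w = G.dist r v + G.dist v w}

theorem mem_descendants {r v w : V} :
    w ∈ G.descendants r v ↔ G.dist r w = G.dist r v + G.dist v w := by
  simp [descendants]

theorem self_mem_descendants (r v : V) : v ∈ G.descendants r v := by
  simp [mem_descendants]

theorem descendants_self (r : V) : G.descendants r r = univ := by
  ext w
  simp [mem_descendants]

theorem Connected.descendants_subset_erase [DecidableEq V] (hG : G.Connected) {r v w : V}
    (hvw : G.Adj v w) (hd : G.dist r w = G.dist r v + 1) :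
    G.descendants r w ⊆ (G.descendants r v).erase v := by
  intro x hx
  rw [mem_descendants] at hx
  have hrx : G.dist r x ≤ G.dist r v + G.dist v x := hG.dist_triangle
  have hvx : G.dist v x ≤ G.dist v w + G.dist w x := hG.dist_triangle
  have hvw' : G.dist v w = 1 := dist_eq_one_iff_adj.2 hvw
  refine mem_erase.2 ⟨?_, mem_descendants.2 (by omega)⟩
  rintro rfl
  have : G.dist w x = 1 := dist_eq_one_iff_adj.2 hvw.symm
  omega

theorem IsTree.disjoint_descendants (hT : G.IsTree) {r v w₁ w₂ : V}
    (h₁ : G.Adj v w₁) (h₂ : G.Adj v w₂)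
    (hd₁ : G.dist r w₁ = G.dist r v + 1) (hd₂ : G.dist r w₂ = G.dist r v + 1) (hne : w₁ ≠ w₂) :
    Disjoint (G.descendants r w₁) (G.descendants r w₂) := by
  refine Finset.disjoint_left.2 fun x hx₁ hx₂ ↦ hne ?_
  -- seen from `x`, both children are parents of `v`
  have toward_x : ∀ w, G.Adj v w → G.dist r w = G.dist r v + 1 → x ∈ G.descendants r w →
      G.dist x v = G.dist x w + 1 := by
    intro w hvw hd hx
    rw [mem_descendants] at hx
    have hrx : G.dist r x ≤ G.dist r v + G.dist v x := hT.connected.dist_triangle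
    have hvx : G.dist v x ≤ G.dist v w + G.dist w x := hT.connected.dist_triangle
    have hvw' : G.dist v w = 1 := dist_eq_one_iff_adj.2 hvw
    rw [dist_comm (u := x) (v := v), dist_comm (u := x) (v := w)]
    omega
  exact hT.eq_of_adj_of_dist_eq_add_one h₁.symm h₂.symm
    (toward_x w₁ h₁ hd₁ hx₁) (toward_x w₂ h₂ hd₂ hx₂)

theorem IsTree.one_add_sum_le_card_descendants (hT : G.IsTree) {c : V → ℕ} {r v : V}
    {s : Finset ℕ} {f : ℕ → ℕ}
    (hchild : ∀ m ∈ s, ∃ w, G.Adj v w ∧ G.dist r w = G.dist r v + 1 ∧ c w = m ∧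
      f m ≤ #(G.descendants r w)) :
    1 + ∑ m ∈ s, f m ≤ #(G.descendants r v) := by
  classical
  have : Nonempty V := ⟨v⟩
  choose! w hvw hd hc hf using hchild
  have hdisj : (s : Set ℕ).PairwiseDisjoint fun m ↦ G.descendants r (w m) :=
    fun m₁ h₁ m₂ h₂ hne ↦ hT.disjoint_descendants (hvw m₁ h₁) (hvw m₂ h₂) (hd m₁ h₁) (hd m₂ h₂)
      fun h ↦ hne (by rw [← hc m₁ h₁, ← hc m₂ h₂, h])
  calc 1 + ∑ m ∈ s, f m
      ≤ 1 + ∑ m ∈ s, #(G.descendants r (w m)) := by gcongr with m hm; exact hf m hm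
    _ = 1 + #(s.biUnion fun m ↦ G.descendants r (w m)) := by rw [card_biUnion hdisj]
    _ ≤ 1 + #((G.descendants r v).erase v) := by
        gcongr
        exact biUnion_subset.2 fun m hm ↦
          hT.connected.descendants_subset_erase (hvw m hm) (hd m hm)
    _ = #(G.descendants r v) := by
        rw [add_comm, card_erase_add_one (self_mem_descendants r v)]

end SimpleGraph

theorem sum_Icc_two_pow_sub_one (t : ℕ) : ∑ l ∈ Icc 1 t, (2 : ℤ) ^ (l - 1) = 2 ^ t - 1 := by
  induction t with
  | zero => simp
  | succ t ih =>
    rw [sum_Icc_succ_top (by omega), ih, Nat.add_sub_cancel, pow_succ]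
    ring

/-- Lower bound for the subtree below a vertex of color `i` whose parent has color `j`, in a
Grundy coloring of a rooted tree. -/
def grundyBound (i j : ℕ) : ℕ := 1 + ∑ m ∈ (Icc 1 (i - 1)).erase j, 2 ^ (m - 1)

theorem grundyBound_cast {i j : ℕ} (hj : 1 ≤ j) :
    (grundyBound i j : ℤ) = 2 ^ (i - 1) - if j < i then 2 ^ (j - 1) else 0 := by
  unfold grundyBound
  push_cast
  split_ifs with hji
  · rw [sum_erase_eq_sub (mem_Icc.2 ⟨hj, by omega⟩), sum_Icc_two_pow_sub_one]
    ring
  · rw [erase_eq_of_notMem (by simp only [mem_Icc]; omega), sum_Icc_two_pow_sub_one]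
    ring

theorem grundyBound_of_le {i j : ℕ} (hij : i ≤ j) : grundyBound i j = 2 ^ (i - 1) := by
  have h : (grundyBound i j : ℤ) = 2 ^ (i - 1) := by
    unfold grundyBound
    push_cast
    rw [erase_eq_of_notMem (by simp only [mem_Icc]; omega), sum_Icc_two_pow_sub_one]
    ring
  exact_mod_cast h

/-- Lower bound for the subtree below a color-dominating child of color `j` of the root, when the
root has the largest color `n + 1`. -/
def dominatingBound (n j : ℕ) : ℕ := 1 + ∑ i ∈ (Icc 1 n).erase j, grundyBound i j

theorem dominatingBound_cast {n j : ℕ} (hj : j ∈ Icc 1 n) :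
    (dominatingBound n j : ℤ) = 2 ^ n - (n - j + 1) * 2 ^ (j - 1) := by
  obtain ⟨hj₁, hjn⟩ := mem_Icc.1 hj
  have hlarger : #((Icc 1 n).filter (j < ·)) = n - j := by
    rw [show (Icc 1 n).filter (j < ·) = Icc (j + 1) n by ext; simp only [mem_filter, mem_Icc]; omega]
    simp
  unfold dominatingBound
  push_cast
  rw [sum_congr rfl fun i _ ↦ grundyBound_cast hj₁, sum_sub_distrib,
    sum_erase_eq_sub hj, sum_Icc_two_pow_sub_one, sum_erase _ (by simp), ← sum_filter,
    sum_const, hlarger, nsmul_eq_mul, Nat.cast_sub hjn]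
  ring

theorem sum_Icc_mul_two_pow (n : ℕ) :
    ∑ j ∈ Icc 1 n, ((n : ℤ) - j + 1) * 2 ^ (j - 1) = 2 ^ (n + 1) - n - 2 := by
  induction n with
  | zero => simp
  | succ n ih =>
    rw [sum_Icc_succ_top (by omega)]
    have hshift : ∑ j ∈ Icc 1 n, (((n + 1 : ℕ) : ℤ) - j + 1) * 2 ^ (j - 1)
        = ∑ j ∈ Icc 1 n, (((n : ℤ) - j + 1) * 2 ^ (j - 1) + 2 ^ (j - 1)) :=
      sum_congr rfl fun j _ ↦ by push_cast; ring
    rw [hshift, sum_add_distrib, ih, sum_Icc_two_pow_sub_one, Nat.add_sub_cancel]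
    push_cast
    ring

theorem one_add_sum_dominatingBound_cast (n : ℕ) :
    ((1 + ∑ j ∈ Icc 1 n, dominatingBound n j : ℕ) : ℤ) = (n - 2) * 2 ^ n + n + 3 := by
  push_cast
  rw [sum_congr rfl fun j hj ↦ dominatingBound_cast hj, sum_sub_distrib, sum_Icc_mul_two_pow,
    sum_const, Nat.card_Icc, Nat.add_sub_cancel, nsmul_eq_mul]
  ring

namespace SimpleGraph

variable {V : Type*} [Fintype V] {G : SimpleGraph V} {k : ℕ} {c : V → ℕ}

theorem IsTree.grundyBound_le_card_descendants (hT : G.IsTree) (hc : IsGrundyColoring G k c)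
    {r p v : V} (hpv : G.Adj p v) (hd : G.dist r v = G.dist r p + 1) :
    grundyBound (c v) (c p) ≤ #(G.descendants r v) := by
  induction hn : c v using Nat.strong_induction_on generalizing p v with
  | _ n ih =>
  refine hT.one_add_sum_le_card_descendants (c := c) fun m hm ↦ ?_
  obtain ⟨hmp, hm⟩ := mem_erase.1 hm
  obtain ⟨hm₁, hmn⟩ := mem_Icc.1 hm
  have hvk := (mem_Icc.1 (hc.1.1 v)).2
  obtain ⟨w, hvw, hwm⟩ := hc.2 v m (mem_Icc.2 ⟨hm₁, by omega⟩) (by omega)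
  have hchild := hT.dist_eq_add_one_of_adj_of_ne hpv hd hvw (by rintro rfl; exact hmp hwm.symm)
  refine ⟨w, hvw, hchild, hwm, ?_⟩
  have hw := ih m (by omega) hvw hchild hwm
  rwa [hn, grundyBound_of_le (by omega)] at hw

theorem IsTree.dominatingBound_le_card_descendants {n : ℕ} (hT : G.IsTree)
    (hc : IsGrundyColoring G (n + 1) c) {r p v : V} (hv : IsCDVertex G (n + 1) c v)
    (hpv : G.Adj p v) (hd : G.dist r v = G.dist r p + 1) (hp : c p = n + 1) :
    dominatingBound n (c v) ≤ #(G.descendants r v) := by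
  refine hT.one_add_sum_le_card_descendants (c := c) fun i hi ↦ ?_
  obtain ⟨hiv, hi⟩ := mem_erase.1 hi
  obtain ⟨hi₁, hin⟩ := mem_Icc.1 hi
  obtain ⟨w, hvw, hwi⟩ := hv i (mem_Icc.2 ⟨hi₁, by omega⟩) hiv
  have hwp : w ≠ p := by
    rintro rfl
    omega
  have hchild := hT.dist_eq_add_one_of_adj_of_ne hpv hd hvw hwp
  exact ⟨w, hvw, hchild, hwi, hwi ▸ hT.grundyBound_le_card_descendants hc hvw hchild⟩

end SimpleGraph

open SimpleGraph in
/-- If a finite tree admits a z-coloring using `k` colors, then it has at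
least `(k-3)·2^(k-1) + k + 2` vertices (an inequality of integers). -/
theorem statement_17 {V : Type*} [Fintype V] (G : SimpleGraph V) (hT : G.IsTree)
    (k : ℕ) (c : V → ℕ) (hc : IsZColoring G k c) :
    ((k : ℤ) - 3) * 2 ^ (k - 1) + (k : ℤ) + 2 ≤ (Fintype.card V : ℤ) := by
  obtain ⟨hgr, -, u, hu, hroot⟩ := hc
  obtain _ | n := k
  · simp
  have hjk (j : ℕ) (hj : j ∈ Icc 1 n) : j ∈ Icc 1 (n + 1) ∧ j ≠ n + 1 := by
    simp only [mem_Icc] at hj ⊢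
    omega
  have hr := (hu (n + 1) (by simp)).1
  have hbound : 1 + ∑ j ∈ Icc 1 n, dominatingBound n j ≤ Fintype.card V := by
    rw [← card_univ, ← descendants_self (G := G) (u (n + 1))]
    refine hT.one_add_sum_le_card_descendants (c := c) fun j hj ↦ ?_
    obtain ⟨hju, hjd⟩ := hu j (hjk j hj).1
    have hadj := hroot j (hjk j hj).1 (hjk j hj).2
    have hd : G.dist (u (n + 1)) (u j) = G.dist (u (n + 1)) (u (n + 1)) + 1 := by
      rw [dist_self, dist_eq_one_iff_adj.2 hadj]
    refine ⟨u j, hadj, hd, hju, ?_⟩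
    simpa [hju] using hT.dominatingBound_le_card_descendants hgr hjd hadj hd hr
  have hcast := one_add_sum_dominatingBound_cast n ▸ (Nat.cast_le (α := ℤ)).2 hbound
  push_cast at hcast ⊢
  linarith
end

section
/- For every finite tree T with at least one vertex, Γ(T) ≤ z(T)². -/
namespace Stmt18
open SimpleGraph Walk


open SimpleGraph Walk

variable {V : Type*} {G : SimpleGraph V}

noncomputable def pt (hT : G.IsTree) (r w : V) : G.Walk r w :=
  (hT.existsUnique_path r w).exists.choose

lemma pt_isPath (hT : G.IsTree) (r w : V) : (pt hT r w).IsPath :=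
  (hT.existsUnique_path r w).exists.choose_spec

lemma pt_unique (hT : G.IsTree) {r w : V} (q : G.Walk r w) (hq : q.IsPath) :
    q = pt hT r w :=
  (hT.existsUnique_path r w).unique hq (pt_isPath hT r w)

lemma pt_self (hT : G.IsTree) (r : V) : pt hT r r = Walk.nil :=
  (pt_unique hT Walk.nil IsPath.nil).symm

lemma exists_parent (hT : G.IsTree) {r w : V} (hw : w ≠ r) :
    ∃ (u : V) (h : G.Adj u w), pt hT r w = (pt hT r u).concat h := by
  obtain ⟨x, h, q, hq⟩ := Walk.exists_eq_cons_of_ne hw ((pt hT r w).reverse)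
  have hqp : q.reverse.IsPath := by
    have h2 := (pt_isPath hT r w).reverse
    rw [hq] at h2
    exact (IsPath.of_cons h2).reverse
  refine ⟨x, h.symm, ?_⟩
  have h3 := congrArg Walk.reverse hq
  rw [Walk.reverse_reverse, Walk.reverse_cons] at h3
  rw [← pt_unique hT q.reverse hqp]
  exact h3

lemma adj_dichotomy (hT : G.IsTree) (r : V) {u w : V} (h : G.Adj u w) :
    pt hT r w = (pt hT r u).concat h ∨ pt hT r u = (pt hT r w).concat h.symm := by
  classical
  by_cases hw : w ∈ (pt hT r u).support
  · right
    have htake : ((pt hT r u).takeUntil w hw).IsPath := (pt_isPath hT r u).takeUntil hw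
    have hdrop : ((pt hT r u).dropUntil w hw).IsPath := (pt_isPath hT r u).dropUntil hw
    have hsingle : ((Walk.cons h.symm Walk.nil) : G.Walk w u).IsPath := by
      simp [h.ne']
    have hde : (pt hT r u).dropUntil w hw = Walk.cons h.symm Walk.nil :=
      (hT.existsUnique_path w u).unique hdrop hsingle
    have key : pt hT r u = ((pt hT r u).takeUntil w hw).concat h.symm := by
      conv_lhs => rw [← (pt hT r u).take_spec hw]
      rw [hde]
      rfl
    rw [pt_unique hT _ htake] at key
    exact key
  · left
    have hp : ((pt hT r u).concat h).IsPath := by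
      rw [← isPath_reverse_iff, Walk.reverse_concat]
      exact (pt_isPath hT r u).reverse.cons (by simpa using hw)
    exact (pt_unique hT _ hp).symm

def runS (step : ℕ × ℕ → V → V → ℕ × ℕ) : {a b : V} → G.Walk a b → ℕ × ℕ → ℕ × ℕ
  | _, _, Walk.nil, σ => σ
  | a, _, Walk.cons (v := x) _ p, σ => runS step p (step σ a x)

lemma runS_concat (step : ℕ × ℕ → V → V → ℕ × ℕ) {a u w : V} (p : G.Walk a u)
    (h : G.Adj u w) (σ : ℕ × ℕ) :
    runS step (p.concat h) σ = step (runS step p σ) u w := by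
  induction p generalizing σ with
  | nil => rfl
  | cons h' p ih =>
    rw [Walk.concat_cons]
    simp only [runS]
    apply ih

lemma runS_inv (step : ℕ × ℕ → V → V → ℕ × ℕ) (P : ℕ × ℕ → Prop)
    (hP : ∀ σ x y, P σ → P (step σ x y)) {a b : V} (p : G.Walk a b) (σ : ℕ × ℕ)
    (hσ : P σ) : P (runS step p σ) := by
  induction p generalizing σ with
  | nil => exact hσ
  | cons h' p ih => exact ih _ (hP _ _ _ hσ)


open SimpleGraph Walk

variable {V : Type*} {G : SimpleGraph V}

def nxt (t : ℕ) : ℕ := if t = 1 then 2 else 1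

lemma nxt_cases (t : ℕ) : (t = 1 ∧ nxt t = 2) ∨ (t ≠ 1 ∧ nxt t = 1) := by
  unfold nxt; split_ifs with h <;> tauto

open scoped Classical in
/-- transition of the coloring state machine -/
noncomputable def stepF (c : V → ℕ) (N : V → ℕ → V) (m : ℕ) (σ : ℕ × ℕ) (x y : V) : ℕ × ℕ :=
  if σ.1 = 1 then
    if m ≤ c y ∧ c y ≤ 2 * m - 2 ∧ y = N x (c y) then (2, c y - (m - 1))
    else (0, nxt σ.2)
  else if σ.1 = 2 then
    if 1 ≤ c y ∧ c y ≤ m - 1 ∧ c y ≠ σ.2 ∧ y = N x (c y) then (3, c y)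
    else (0, nxt σ.2)
  else if σ.1 = 3 then
    if 1 ≤ c y ∧ c y < σ.2 ∧ y = N x (c y) then (3, c y)
    else (0, nxt σ.2)
  else (0, nxt σ.2)

lemma stepF_cases (c : V → ℕ) (N : V → ℕ → V) (m : ℕ) (σ : ℕ × ℕ) (x y : V) :
    (σ.1 = 1 ∧ m ≤ c y ∧ c y ≤ 2 * m - 2 ∧ y = N x (c y) ∧
      stepF c N m σ x y = (2, c y - (m - 1)))
  ∨ (σ.1 = 2 ∧ 1 ≤ c y ∧ c y ≤ m - 1 ∧ c y ≠ σ.2 ∧ y = N x (c y) ∧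
      stepF c N m σ x y = (3, c y))
  ∨ (σ.1 = 3 ∧ 1 ≤ c y ∧ c y < σ.2 ∧ y = N x (c y) ∧
      stepF c N m σ x y = (3, c y))
  ∨ (stepF c N m σ x y = (0, nxt σ.2)) := by
  unfold stepF
  split_ifs with h1 h2 h3 h4 h5 h6
  · exact Or.inl ⟨h1, h2.1, h2.2.1, h2.2.2, rfl⟩
  · exact Or.inr (Or.inr (Or.inr rfl))
  · exact Or.inr (Or.inl ⟨h3, h4.1, h4.2.1, h4.2.2.1, h4.2.2.2, rfl⟩)
  · exact Or.inr (Or.inr (Or.inr rfl))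
  · exact Or.inr (Or.inr (Or.inl ⟨h5, h6.1, h6.2.1, h6.2.2, rfl⟩))
  · exact Or.inr (Or.inr (Or.inr rfl))
  · exact Or.inr (Or.inr (Or.inr rfl))

lemma stepF_mode1 (c : V → ℕ) (N : V → ℕ → V) (m : ℕ) {σ : ℕ × ℕ} {x y : V}
    (hσ : σ.1 = 1) (h1 : m ≤ c y) (h2 : c y ≤ 2 * m - 2) (h3 : y = N x (c y)) :
    stepF c N m σ x y = (2, c y - (m - 1)) := by
  unfold stepF; rw [if_pos hσ, if_pos ⟨h1, h2, h3⟩]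

lemma stepF_mode2 (c : V → ℕ) (N : V → ℕ → V) (m : ℕ) {σ : ℕ × ℕ} {x y : V}
    (hσ : σ.1 = 2) (h1 : 1 ≤ c y) (h2 : c y ≤ m - 1) (h3 : c y ≠ σ.2)
    (h4 : y = N x (c y)) :
    stepF c N m σ x y = (3, c y) := by
  unfold stepF
  rw [if_neg (by omega), if_pos hσ, if_pos ⟨h1, h2, h3, h4⟩]

lemma stepF_mode3 (c : V → ℕ) (N : V → ℕ → V) (m : ℕ) {σ : ℕ × ℕ} {x y : V}
    (hσ : σ.1 = 3) (h1 : 1 ≤ c y) (h2 : c y < σ.2) (h3 : y = N x (c y)) :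
    stepF c N m σ x y = (3, c y) := by
  unfold stepF
  rw [if_neg (by omega), if_neg (by omega), if_pos hσ, if_pos ⟨h1, h2, h3⟩]

lemma stepF_mode_ne_one (c : V → ℕ) (N : V → ℕ → V) (m : ℕ) (σ : ℕ × ℕ) (x y : V) :
    (stepF c N m σ x y).1 ≠ 1 := by
  rcases stepF_cases c N m σ x y with ⟨_,_,_,_,h⟩|⟨_,_,_,_,_,h⟩|⟨_,_,_,_,h⟩|h <;>
    rw [h] <;> simp


open SimpleGraph Walk

variable {V : Type*} {G : SimpleGraph V}

theorem exists_z (hT : G.IsTree) {k m : ℕ} {c : V → ℕ}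
    (hg : IsGrundyColoring G k c) (hm : 2 ≤ m) (hkm : 2 * m ≤ k + 1) :
    ∃ c' : V → ℕ, IsZColoring G m c' := by
  classical
  obtain ⟨⟨hmem, hadjne, hused⟩, hgr⟩ := hg
  have hc1 : ∀ x, 1 ≤ c x := fun x => (Finset.mem_Icc.1 (hmem x)).1
  have hck : ∀ x, c x ≤ k := fun x => (Finset.mem_Icc.1 (hmem x)).2
  have hk3 : 3 ≤ k := by omega
  obtain ⟨v, hv⟩ := hused k (Finset.mem_Icc.2 ⟨by omega, le_rfl⟩)
  have hex : ∀ x, ∀ i, 1 ≤ i → i < c x → ∃ y, G.Adj x y ∧ c y = i := fun x i h1 h2 =>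
    hgr x i (Finset.mem_Icc.2 ⟨h1, h2.le.trans (hck x)⟩) h2
  choose! N hNadj hNcol using hex
  set S : V → ℕ × ℕ := fun w => runS (stepF c N m) (pt hT v w) (1, m) with hS
  have hpair1 : ∀ a b : ℕ, ((a, b) : ℕ × ℕ).1 = a := fun _ _ => rfl
  have hpair2 : ∀ a b : ℕ, ((a, b) : ℕ × ℕ).2 = b := fun _ _ => rfl
  have hSv : S v = (1, m) := by
    show runS (stepF c N m) (pt hT v v) (1, m) = (1, m)
    rw [pt_self]
    rfl
  have hpar : ∀ w, w ≠ v → ∃ (u : V) (h : G.Adj u w),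
      pt hT v w = (pt hT v u).concat h ∧ S w = stepF c N m (S u) u w := by
    intro w hw
    obtain ⟨u, h, he⟩ := exists_parent hT hw
    refine ⟨u, h, he, ?_⟩
    show runS (stepF c N m) (pt hT v w) (1, m) = _
    rw [he, runS_concat]
  have hinv : ∀ w, 1 ≤ (S w).2 ∧ (S w).2 ≤ m ∧ ((S w).1 = 1 → (S w).2 = m) ∧
      (S w).1 ≤ 3 := by
    intro w
    refine runS_inv _ (fun σ => 1 ≤ σ.2 ∧ σ.2 ≤ m ∧ (σ.1 = 1 → σ.2 = m) ∧ σ.1 ≤ 3) ?_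
      (pt hT v w) (1, m) ⟨by omega, le_rfl, fun _ => rfl, by omega⟩
    intro σ x y hσ
    obtain ⟨i1, i2, i3, i4⟩ := hσ
    rcases stepF_cases c N m σ x y with ⟨h1, h2, h3, h4, h5⟩|⟨h1, h2, h3, h4, h5, h6⟩|
      ⟨h1, h2, h3, h4, h5⟩|h1
    · rw [h5, hpair1, hpair2]; omega
    · rw [h6, hpair1, hpair2]; omega
    · rw [h5, hpair1, hpair2]; omega
    · rw [h1, hpair1, hpair2]
      rcases nxt_cases σ.2 with ⟨b1, b2⟩ | ⟨b1, b2⟩ <;> rw [b2] <;> omega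
  have hne : ∀ u w, G.Adj u w → S w = stepF c N m (S u) u w → (S w).2 ≠ (S u).2 := by
    intro u w h hsw
    obtain ⟨i1, i2, i3, i4⟩ := hinv u
    rcases stepF_cases c N m (S u) u w with ⟨h1, h2, h3, h4, h5⟩|⟨h1, h2, h3, h4, h5, h6⟩|
      ⟨h1, h2, h3, h4, h5⟩|h1
    · rw [hsw, h5, hpair2]; have := i3 h1; omega
    · rw [hsw, h6, hpair2]; exact h4
    · rw [hsw, h5, hpair2]; omega
    · rw [hsw, h1, hpair2]
      rcases nxt_cases (S u).2 with ⟨b1, b2⟩ | ⟨b1, b2⟩ <;> rw [b2] <;> omega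
  have hproper : ∀ u w, G.Adj u w → (S u).2 ≠ (S w).2 := by
    intro u w h
    rcases adj_dichotomy hT v h with he | he
    · have hsw : S w = stepF c N m (S u) u w := by
        show runS (stepF c N m) (pt hT v w) (1, m) = _
        rw [he, runS_concat]
      exact (hne u w h hsw).symm
    · have hsu : S u = stepF c N m (S w) w u := by
        show runS (stepF c N m) (pt hT v u) (1, m) = _
        rw [he, runS_concat]
      exact hne w u h.symm hsu
  have hmode1 : ∀ w, (S w).1 = 1 → w = v := by
    intro w h1
    by_contra hw
    obtain ⟨u, hadj, _, hsw⟩ := hpar w hw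
    rw [hsw] at h1
    exact stepF_mode_ne_one c N m (S u) u w h1
  have hmode3col : ∀ w, (S w).1 = 3 → (S w).2 = c w ∧ 1 ≤ c w := by
    intro w h3m
    have hw : w ≠ v := by
      intro he; rw [he, hSv, hpair1] at h3m; omega
    obtain ⟨u, hadj, he, hsw⟩ := hpar w hw
    rcases stepF_cases c N m (S u) u w with ⟨h1, h2, h3, h4, h5⟩|⟨h1, h2, h3, h4, h5, h6⟩|
      ⟨h1, h2, h3, h4, h5⟩|h1
    · rw [hsw, h5, hpair1] at h3m; omega
    · rw [hsw, h6, hpair2]; exact ⟨rfl, h2⟩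
    · rw [hsw, h5, hpair2]; exact ⟨rfl, h2⟩
    · rw [hsw, h1, hpair1] at h3m; omega
  have hmode2 : ∀ w, (S w).1 = 2 →
      G.Adj v w ∧ m ≤ c w ∧ c w ≤ 2 * m - 2 ∧ (S w).2 + (m - 1) = c w ∧
      (pt hT v w).support = [v, w] := by
    intro w h2m
    have hw : w ≠ v := by
      intro he; rw [he, hSv, hpair1] at h2m; omega
    obtain ⟨u, hadj, he, hsw⟩ := hpar w hw
    rcases stepF_cases c N m (S u) u w with ⟨h1, h2, h3, h4, h5⟩|⟨h1, h2, h3, h4, h5, h6⟩|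
      ⟨h1, h2, h3, h4, h5⟩|h1
    · have huv : u = v := hmode1 u h1
      subst huv
      refine ⟨hadj, h2, h3, ?_, ?_⟩
      · rw [hsw, h5, hpair2]; omega
      · rw [he, pt_self, Walk.support_concat, Walk.support_nil]
        rfl
    · rw [hsw, h6, hpair1] at h2m; omega
    · rw [hsw, h5, hpair1] at h2m; omega
    · rw [hsw, h1, hpair1] at h2m; omega
  have hmode3 : ∀ w, (S w).1 = 3 → ∃ (u : V) (h : G.Adj u w),
      pt hT v w = (pt hT v u).concat h ∧ ((S u).1 = 2 ∨ (S u).1 = 3) ∧ c w < c u := by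
    intro w h3m
    have hw : w ≠ v := by
      intro he; rw [he, hSv, hpair1] at h3m; omega
    obtain ⟨u, hadj, he, hsw⟩ := hpar w hw
    rcases stepF_cases c N m (S u) u w with ⟨h1, h2, h3, h4, h5⟩|⟨h1, h2, h3, h4, h5, h6⟩|
      ⟨h1, h2, h3, h4, h5⟩|h1
    · rw [hsw, h5, hpair1] at h3m; omega
    · obtain ⟨_, hcu, _, _, _⟩ := hmode2 u h1
      exact ⟨u, hadj, he, Or.inl h1, by omega⟩
    · obtain ⟨hcu, _⟩ := hmode3col u h1
      exact ⟨u, hadj, he, Or.inr h1, by omega⟩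
    · rw [hsw, h1, hpair1] at h3m; omega
  have hsupp : ∀ n w, (pt hT v w).length = n → ((S w).1 = 2 ∨ (S w).1 = 3) →
      ∀ z ∈ (pt hT v w).support, z ≠ w → c w < c z := by
    intro n
    induction n using Nat.strong_induction_on with
    | _ n ih =>
      intro w hlen hmode z hz hzw
      rcases hmode with h2m | h3m
      · obtain ⟨hadj, hcw1, hcw2, _, hsup⟩ := hmode2 w h2m
        rw [hsup] at hz
        simp at hz
        rcases hz with rfl | rfl
        · omega
        · exact absurd rfl hzw
      · obtain ⟨u, hadj, he, humode, hlt⟩ := hmode3 w h3m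
        rw [he] at hz
        simp only [Walk.support_concat, List.concat_eq_append, List.mem_append,
          List.mem_singleton] at hz
        rcases hz with hz' | rfl
        · by_cases hzu : z = u
          · subst hzu; exact hlt
          · have hlen' : (pt hT v u).length < n := by
              rw [← hlen, he, Walk.length_concat]; omega
            exact lt_trans hlt (ih (pt hT v u).length hlen' u rfl humode z hz' hzu)
        · exact absurd rfl hzw
  have hchild : ∀ x y (h : G.Adj x y), (x = v ∨ (S x).1 = 2 ∨ (S x).1 = 3) → c y < c x →
      S y = stepF c N m (S x) x y := by
    intro x y h hx hcy
    have hy : y ∉ (pt hT v x).support := by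
      intro hy
      rcases hx with rfl | hx
      · rw [pt_self] at hy
        simp at hy
        rw [hy] at hcy
        exact lt_irrefl _ hcy
      · by_cases hyx : y = x
        · rw [hyx] at hcy; exact lt_irrefl _ hcy
        · exact absurd hcy (not_lt.2 (le_of_lt (hsupp (pt hT v x).length x rfl hx y hy hyx)))
    rcases adj_dichotomy hT v h with he | he
    · show runS (stepF c N m) (pt hT v y) (1, m) = _
      rw [he, runS_concat]
    · exfalso
      apply hy
      rw [he]
      simp only [Walk.support_concat, List.concat_eq_append, List.mem_append,
        List.mem_singleton]
      exact Or.inl (Walk.end_mem_support _)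
  have hUadj : ∀ j, 1 ≤ j → j ≤ m - 1 → G.Adj v (N v (m - 1 + j)) := by
    intro j h1 h2
    exact hNadj v (m - 1 + j) (by omega) (by omega)
  have hUcol : ∀ j, 1 ≤ j → j ≤ m - 1 → c (N v (m - 1 + j)) = m - 1 + j := by
    intro j h1 h2
    exact hNcol v (m - 1 + j) (by omega) (by omega)
  have hUst : ∀ j, 1 ≤ j → j ≤ m - 1 → S (N v (m - 1 + j)) = (2, j) := by
    intro j h1 h2
    have hcU := hUcol j h1 h2
    have hstep := hchild v (N v (m - 1 + j)) (hUadj j h1 h2) (Or.inl rfl) (by omega)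
    rw [hstep, hSv]
    rw [stepF_mode1 c N m rfl (by omega) (by omega) (by rw [hcU])]
    rw [hcU]
    congr 1
    omega
  have hchild2 : ∀ w, (S w).1 = 2 → ∀ i, 1 ≤ i → i ≤ m - 1 → i ≠ (S w).2 →
      ∃ y, G.Adj w y ∧ (S y).2 = i := by
    intro w h2m i hi1 hi2 hi3
    obtain ⟨_, hcw1, hcw2, hcol, _⟩ := hmode2 w h2m
    have hiv : i < c w := by omega
    have ha := hNadj w i hi1 hiv
    have hc := hNcol w i hi1 hiv
    refine ⟨N w i, ha, ?_⟩
    have hs := hchild w (N w i) ha (Or.inr (Or.inl h2m)) (by omega)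
    rw [hs, stepF_mode2 c N m h2m (by omega) (by omega) (by omega) (by rw [hc]), hpair2]
    exact hc
  have hchild3 : ∀ w, (S w).1 = 3 → ∀ i, 1 ≤ i → i < (S w).2 →
      ∃ y, G.Adj w y ∧ (S y).2 = i := by
    intro w h3m i hi1 hi2
    obtain ⟨hcol, hcw1⟩ := hmode3col w h3m
    have hiv : i < c w := by omega
    have ha := hNadj w i hi1 hiv
    have hc := hNcol w i hi1 hiv
    refine ⟨N w i, ha, ?_⟩
    have hs := hchild w (N w i) ha (Or.inr (Or.inr h3m)) (by omega)
    rw [hs, stepF_mode3 c N m h3m (by omega) (by omega) (by rw [hc]), hpair2]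
    exact hc
  -- the pieces of the z-coloring
  have hA : ∀ w, (S w).2 ∈ Finset.Icc 1 m := fun w =>
    Finset.mem_Icc.2 ⟨(hinv w).1, (hinv w).2.1⟩
  have hB : ∀ a b, G.Adj a b → (S a).2 ≠ (S b).2 := hproper
  have hC : ∀ i ∈ Finset.Icc 1 m, ∃ w, (S w).2 = i := by
    intro i hi
    rw [Finset.mem_Icc] at hi
    by_cases him : i = m
    · exact ⟨v, by rw [hSv]; exact him.symm⟩
    · exact ⟨N v (m - 1 + i), by rw [hUst i hi.1 (by omega)]⟩
  have hD : ∀ w, ∀ i ∈ Finset.Icc 1 m, i < (S w).2 → ∃ y, G.Adj w y ∧ (S y).2 = i := by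
    intro w i hi hlt
    rw [Finset.mem_Icc] at hi
    obtain ⟨j1, j2, j3, j4⟩ := hinv w
    have hmode : (S w).1 = 0 ∨ (S w).1 = 1 ∨ (S w).1 = 2 ∨ (S w).1 = 3 := by omega
    rcases hmode with h0 | h1 | h2 | h3
    · have hw : w ≠ v := by
        intro he; rw [he, hSv, hpair1] at h0; omega
      obtain ⟨u, hadj, _, hsw⟩ := hpar w hw
      rcases stepF_cases c N m (S u) u w with ⟨a1, a2, a3, a4, a5⟩|⟨a1, a2, a3, a4, a5, a6⟩|
        ⟨a1, a2, a3, a4, a5⟩|a1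
      · rw [hsw, a5, hpair1] at h0; omega
      · rw [hsw, a6, hpair1] at h0; omega
      · rw [hsw, a5, hpair1] at h0; omega
      · have hval : (S w).2 = nxt (S u).2 := by rw [hsw, a1, hpair2]
        rcases nxt_cases (S u).2 with ⟨b1, b2⟩ | ⟨b1, b2⟩
        · exact ⟨u, hadj.symm, by omega⟩
        · exact absurd hi.1 (by omega)
    · have hwv := hmode1 w h1
      subst hwv
      have hm' : (S w).2 = m := j3 h1
      refine ⟨N w (m - 1 + i), hUadj i hi.1 (by omega), ?_⟩
      rw [hUst i hi.1 (by omega)]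
    · exact hchild2 w h2 i hi.1 (by omega) (by omega)
    · exact hchild3 w h3 i hi.1 hlt
  have hCDv : IsCDVertex G m (fun w => (S w).2) v := by
    intro j hj hne'
    rw [Finset.mem_Icc] at hj
    have hne2 : j ≠ (S v).2 := hne'
    have hSvm : (S v).2 = m := by rw [hSv]
    have hjm : j ≤ m - 1 := by omega
    refine ⟨N v (m - 1 + j), hUadj j hj.1 hjm, ?_⟩
    show (S (N v (m - 1 + j))).2 = j
    rw [hUst j hj.1 hjm]
  have hCDU : ∀ j, 1 ≤ j → j ≤ m - 1 →
      IsCDVertex G m (fun w => (S w).2) (N v (m - 1 + j)) := by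
    intro j h1 h2 i hi hne'
    rw [Finset.mem_Icc] at hi
    have hS2 : (S (N v (m - 1 + j))).2 = j := by rw [hUst j h1 h2]
    have hS1 : (S (N v (m - 1 + j))).1 = 2 := by rw [hUst j h1 h2]
    have hne2 : i ≠ (S (N v (m - 1 + j))).2 := hne'
    by_cases him : i = m
    · refine ⟨v, (hUadj j h1 h2).symm, ?_⟩
      show (S v).2 = i
      rw [hSv]
      exact him.symm
    · obtain ⟨y, hy, hyc⟩ := hchild2 _ hS1 i hi.1 (by omega) (by omega)
      exact ⟨y, hy, hyc⟩
  refine ⟨fun w => (S w).2, ⟨⟨hA, hB, hC⟩, hD⟩, ⟨⟨hA, hB, hC⟩, ?_⟩, ?_⟩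
  · intro i hi
    rw [Finset.mem_Icc] at hi
    by_cases him : i = m
    · exact ⟨v, by show (S v).2 = i; rw [hSv]; exact him.symm, hCDv⟩
    · refine ⟨N v (m - 1 + i), ?_, hCDU i hi.1 (by omega)⟩
      show (S (N v (m - 1 + i))).2 = i
      rw [hUst i hi.1 (by omega)]
  · refine ⟨fun j => if j = m then v else N v (m - 1 + j), ?_, ?_⟩
    · intro j hj
      rw [Finset.mem_Icc] at hj
      dsimp only
      by_cases hjm : j = m
      · have hif : (if j = m then v else N v (m - 1 + j)) = v := if_pos hjm
        rw [hif]
        refine ⟨?_, hCDv⟩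
        show (S v).2 = j
        rw [hSv]
        exact hjm.symm
      · have hif : (if j = m then v else N v (m - 1 + j)) = N v (m - 1 + j) := if_neg hjm
        rw [hif]
        refine ⟨?_, hCDU j hj.1 (by omega)⟩
        show (S (N v (m - 1 + j))).2 = j
        rw [hUst j hj.1 (by omega)]
    · intro j hj hjm
      rw [Finset.mem_Icc] at hj
      dsimp only
      have h1 : (if m = m then v else N v (m - 1 + m)) = v := if_pos rfl
      have h2 : (if j = m then v else N v (m - 1 + j)) = N v (m - 1 + j) := if_neg hjm
      rw [h1, h2]
      exact hUadj j hj.1 (by omega)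


theorem exists_z_two (hT : G.IsTree) {r r' : V} (h : G.Adj r r') :
    ∃ c' : V → ℕ, IsZColoring G 2 c' := by
  classical
  set c' : V → ℕ := fun w => if Even (pt hT r w).length then 1 else 2 with hc'
  have hcr : c' r = 1 := by
    show (if Even (pt hT r r).length then 1 else 2) = 1
    rw [pt_self]
    norm_num
  have hrr' : r ≠ r' := h.ne
  have hptr' : pt hT r r' = Walk.cons h Walk.nil := by
    refine (pt_unique hT _ ?_).symm
    rw [Walk.cons_isPath_iff]
    exact ⟨Walk.IsPath.nil, by simp [hrr']⟩
  have hcr' : c' r' = 2 := by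
    show (if Even (pt hT r r').length then 1 else 2) = 2
    rw [hptr']
    norm_num
  have hflip : ∀ u w (hadj : G.Adj u w), pt hT r w = (pt hT r u).concat hadj →
      (c' u = 1 ∧ c' w = 2) ∨ (c' u = 2 ∧ c' w = 1) := by
    intro u w hadj he
    have hlen : (pt hT r w).length = (pt hT r u).length + 1 := by
      rw [he, Walk.length_concat]
    by_cases hp : Even (pt hT r u).length
    · left
      constructor
      · show (if Even (pt hT r u).length then 1 else 2) = 1
        rw [if_pos hp]
      · show (if Even (pt hT r w).length then 1 else 2) = 2
        rw [if_neg (by rw [hlen]; simp [Nat.even_add_one, hp])]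
    · right
      constructor
      · show (if Even (pt hT r u).length then 1 else 2) = 2
        rw [if_neg hp]
      · show (if Even (pt hT r w).length then 1 else 2) = 1
        rw [if_pos (by rw [hlen]; simp [Nat.even_add_one, hp])]
  have hproper : ∀ u w, G.Adj u w → c' u ≠ c' w := by
    intro u w hadj
    rcases adj_dichotomy hT r hadj with he | he
    · rcases hflip u w hadj he with ⟨e1, e2⟩ | ⟨e1, e2⟩ <;> rw [e1, e2] <;> omega
    · rcases hflip w u hadj.symm he with ⟨e1, e2⟩ | ⟨e1, e2⟩ <;> rw [e1, e2] <;> omega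
  have hrange : ∀ w, c' w = 1 ∨ c' w = 2 := by
    intro w
    show (if Even (pt hT r w).length then 1 else 2) = 1 ∨
      (if Even (pt hT r w).length then 1 else 2) = 2
    split_ifs <;> simp
  have hgrundy : ∀ w, ∀ i ∈ Finset.Icc 1 2, i < c' w → ∃ y, G.Adj w y ∧ c' y = i := by
    intro w i hi hlt
    rw [Finset.mem_Icc] at hi
    have hw2 : c' w = 2 := by rcases hrange w with h1 | h1 <;> omega
    have hi1 : i = 1 := by omega
    have hwr : w ≠ r := by
      intro he; rw [he, hcr] at hw2; omega
    obtain ⟨u, hadj, he⟩ := exists_parent hT hwr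
    rcases hflip u w hadj he with ⟨e1, e2⟩ | ⟨e1, e2⟩
    · exact ⟨u, hadj.symm, by omega⟩
    · omega
  have hCDr : IsCDVertex G 2 c' r := by
    intro j hj hne
    rw [Finset.mem_Icc] at hj
    rw [hcr] at hne
    have : j = 2 := by omega
    exact ⟨r', h, by omega⟩
  have hCDr' : IsCDVertex G 2 c' r' := by
    intro j hj hne
    rw [Finset.mem_Icc] at hj
    rw [hcr'] at hne
    have : j = 1 := by omega
    exact ⟨r, h.symm, by omega⟩
  have hused : ∀ i ∈ Finset.Icc 1 2, ∃ w, c' w = i := by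
    intro i hi
    rw [Finset.mem_Icc] at hi
    by_cases hi1 : i = 1
    · exact ⟨r, by omega⟩
    · exact ⟨r', by omega⟩
  have hmem : ∀ w, c' w ∈ Finset.Icc 1 2 := by
    intro w
    rw [Finset.mem_Icc]
    rcases hrange w with h1 | h1 <;> omega
  refine ⟨c', ⟨⟨hmem, hproper, hused⟩, hgrundy⟩, ⟨⟨hmem, hproper, hused⟩, ?_⟩, ?_⟩
  · intro i hi
    rw [Finset.mem_Icc] at hi
    by_cases hi1 : i = 1
    · exact ⟨r, by omega, hCDr⟩
    · exact ⟨r', by omega, hCDr'⟩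
  · refine ⟨fun j => if j = 1 then r else r', ?_, ?_⟩
    · intro j hj
      rw [Finset.mem_Icc] at hj
      dsimp only
      by_cases hj1 : j = 1
      · have hif : (if j = 1 then r else r') = r := if_pos hj1
        rw [hif]
        exact ⟨by omega, hCDr⟩
      · have hif : (if j = 1 then r else r') = r' := if_neg hj1
        rw [hif]
        have : j = 2 := by omega
        exact ⟨by omega, hCDr'⟩
    · intro j hj hj2
      rw [Finset.mem_Icc] at hj
      dsimp only
      have hj1 : j = 1 := by omega
      have hif1 : (if (2 : ℕ) = 1 then r else r') = r' := if_neg (by omega)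
      have hif2 : (if j = 1 then r else r') = r := if_pos hj1
      rw [hif1, hif2]
      exact h.symm

end Stmt18

open Stmt18 in
/-- For every finite tree with at least one vertex, `Γ(T) ≤ z(T)²`. -/
theorem statement_18 {V : Type*} [Fintype V] [Nonempty V] (G : SimpleGraph V)
    (hT : G.IsTree) : grundyNumber G ≤ (zNumber G) ^ 2 := by
  classical
  have hbound : ∀ (k : ℕ) (c : V → ℕ), IsProperColoring G k c → k ≤ Fintype.card V := by
    intro k c hp
    obtain ⟨hmem, hadj, hused⟩ := hp
    choose! f hf using hused
    have hinj : Set.InjOn f (Finset.Icc 1 k) := by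
      intro i hi j hj hij
      rw [← hf i hi, ← hf j hj, hij]
    have hcard := Finset.card_le_card_of_injOn f (fun x _ => Finset.mem_univ (f x)) hinj
    simpa using hcard
  have hbddz : BddAbove {k | ∃ c : V → ℕ, IsZColoring G k c} := by
    refine ⟨Fintype.card V, ?_⟩
    rintro k ⟨c, hz⟩
    exact hbound k c hz.1.1
  apply csSup_le'
  rintro k ⟨c, hg⟩
  by_cases hE : ∃ x y : V, G.Adj x y
  · obtain ⟨x, y, hxy⟩ := hE
    have h2 : (2 : ℕ) ∈ {k | ∃ c : V → ℕ, IsZColoring G k c} := exists_z_two hT hxy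
    have hz2 : 2 ≤ zNumber G := le_csSup hbddz h2
    by_cases hk : k ≤ 4
    · calc k ≤ 2 ^ 2 := by omega
        _ ≤ (zNumber G) ^ 2 := Nat.pow_le_pow_left hz2 2
    · push_neg at hk
      have hm2 : 2 ≤ (k + 1) / 2 := by omega
      have hkm : 2 * ((k + 1) / 2) ≤ k + 1 := by omega
      obtain ⟨c', hzc⟩ := exists_z hT hg hm2 hkm
      have hmz : (k + 1) / 2 ≤ zNumber G := le_csSup hbddz ⟨c', hzc⟩
      have hkq : k ≤ ((k + 1) / 2) ^ 2 := by
        have h1 : k ≤ 2 * ((k + 1) / 2) := by omega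
        have h2 : 2 * ((k + 1) / 2) ≤ ((k + 1) / 2) * ((k + 1) / 2) :=
          Nat.mul_le_mul_right _ hm2
        rw [pow_two]
        omega
      calc k ≤ ((k + 1) / 2) ^ 2 := hkq
        _ ≤ (zNumber G) ^ 2 := Nat.pow_le_pow_left hmz 2
  · push_neg at hE
    have h1 : (1 : ℕ) ∈ {k | ∃ c : V → ℕ, IsZColoring G k c} := by
      have hpc : IsProperColoring G 1 (fun _ => (1 : ℕ)) := by
        refine ⟨fun v => by simp, fun u v huv => absurd huv (hE u v), ?_⟩
        intro i hi
        rw [Finset.mem_Icc] at hi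
        refine ⟨Classical.arbitrary V, ?_⟩
        dsimp only
        omega
      have hcd : IsCDVertex G 1 (fun _ => (1 : ℕ)) (Classical.arbitrary V) := by
        intro j hj hne
        rw [Finset.mem_Icc] at hj
        dsimp only at hne
        omega
      refine ⟨fun _ => 1, ?_, ?_, ?_⟩
      · refine ⟨hpc, ?_⟩
        intro v i hi hlt
        rw [Finset.mem_Icc] at hi
        dsimp only at hlt
        omega
      · refine ⟨hpc, ?_⟩
        intro i hi
        rw [Finset.mem_Icc] at hi
        refine ⟨Classical.arbitrary V, by dsimp only; omega, hcd⟩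
      · refine ⟨fun _ => Classical.arbitrary V, ?_, ?_⟩
        · intro j hj
          rw [Finset.mem_Icc] at hj
          refine ⟨by dsimp only; omega, hcd⟩
        · intro j hj hne
          rw [Finset.mem_Icc] at hj
          omega
    have hz1 : 1 ≤ zNumber G := le_csSup hbddz h1
    have hk1 : k ≤ 1 := by
      by_contra hk
      push_neg at hk
      obtain ⟨x, hx⟩ := hg.1.2.2 1 (Finset.mem_Icc.2 ⟨le_rfl, by omega⟩)
      obtain ⟨y, hy⟩ := hg.1.2.2 2 (Finset.mem_Icc.2 ⟨by omega, by omega⟩)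
      have hxy : x ≠ y := by intro he; rw [he, hy] at hx; omega
      obtain ⟨p⟩ := hT.isConnected.preconnected x y
      cases p with
      | nil => exact hxy rfl
      | cons hadj _ => exact hE _ _ hadj
    calc k ≤ 1 := hk1
      _ ≤ zNumber G := hz1
      _ ≤ (zNumber G) ^ 2 := Nat.le_self_pow (by norm_num) _
end
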